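/- arXiv:1411.1788 — 2 statements merged into one kernel-verified Lean document; each statement's English description precedes it below -/
import Mathlib

section
/- If a signed series-parallel graph G' is of series type (i.e., G' is a series connection of its parts) and both of its endparts are unbalanced, then every edge of G' is contained in a barbell. -/
/-!
Signed multigraphs (parallel edges allowed), two-terminal graphs,
series/parallel connections and flows, following the terminology of
Kaiser–Rollová, "Nowhere-zero flows in signed series-parallel graphs".

Vertices and edges are labelled by natural numbers.  An edge `e` has the
two endvertices `fst e` and `snd e` (its two half-edges are the ends at
`fst e` and at `snd e`), and `sign e = true` means that `e` is positive.
-/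

/-- The value `+1` (pointing towards its endvertex) or `-1` (pointing away)
of a Boolean direction of a half-edge. -/
def dirVal (b : Bool) : ℤ := if b then 1 else -1

/-- A signed multigraph. -/
structure SignedGraph where
  verts : Finset ℕ
  edges : Finset ℕ
  fst : ℕ → ℕ
  snd : ℕ → ℕ
  sign : ℕ → Bool
  fst_mem : ∀ e ∈ edges, fst e ∈ verts
  snd_mem : ∀ e ∈ edges, snd e ∈ verts

namespace SignedGraph

/-- Edge `e` joins the vertices `u` and `v`. -/
def Joins (G : SignedGraph) (e u v : ℕ) : Prop :=
  (G.fst e = u ∧ G.snd e = v) ∨ (G.fst e = v ∧ G.snd e = u)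

/-- `u` and `v` are adjacent (joined by some edge). -/
def Adj (G : SignedGraph) (u v : ℕ) : Prop := ∃ e ∈ G.edges, G.Joins e u v

/-- The degree of a vertex (each incidence of an edge counts once,
so loops count twice). -/
def degree (G : SignedGraph) (v : ℕ) : ℕ :=
  ∑ e ∈ G.edges, ((if G.fst e = v then 1 else 0) + (if G.snd e = v then 1 else 0))

/-- `e` and `f` are parallel edges: distinct edges joining the same
pair of vertices. -/
def Parallel (G : SignedGraph) (e f : ℕ) : Prop :=
  e ≠ f ∧ ((G.fst e = G.fst f ∧ G.snd e = G.snd f) ∨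
           (G.fst e = G.snd f ∧ G.snd e = G.fst f))

/-- `v` is contained in a 2-cycle (a cycle formed by two parallel edges). -/
def In2Cycle (G : SignedGraph) (v : ℕ) : Prop :=
  ∃ e ∈ G.edges, ∃ f ∈ G.edges, G.Parallel e f ∧ G.fst e ≠ G.snd e ∧
    (G.fst e = v ∨ G.snd e = v)

/-- `beta G` is the number of distinct 2-cycles of `G`. -/
def beta (G : SignedGraph) : ℕ :=
  ((G.edges ×ˢ G.edges).filter fun p => p.1 < p.2 ∧ G.fst p.1 ≠ G.snd p.1 ∧
     ((G.fst p.1 = G.fst p.2 ∧ G.snd p.1 = G.snd p.2) ∨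
      (G.fst p.1 = G.snd p.2 ∧ G.snd p.1 = G.fst p.2))).card

/-- An orientation of a signed graph: `o₁ e` (resp. `o₂ e`) tells whether the
half-edge of `e` at `fst e` (resp. at `snd e`) points towards its endvertex.
Of the two half-edges of a positive edge exactly one points towards its
endvertex, while for a negative edge none or both do. -/
def IsOrientation (G : SignedGraph) (o₁ o₂ : ℕ → Bool) : Prop :=
  ∀ e ∈ G.edges, (G.sign e = true → o₁ e ≠ o₂ e) ∧ (G.sign e = false → o₁ e = o₂ e)

/-- The excess (inflow minus outflow) at a vertex `v`. -/
def excess (G : SignedGraph) (o₁ o₂ : ℕ → Bool) (φ : ℕ → ℤ) (v : ℕ) : ℤ :=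
  ∑ e ∈ G.edges, ((if G.fst e = v then dirVal (o₁ e) * φ e else 0) +
                  (if G.snd e = v then dirVal (o₂ e) * φ e else 0))

/-- `(o₁, o₂, φ)` is a nowhere-zero `k`-flow on `G`: an orientation together
with a valuation of the edges by nonzero integers of absolute value less
than `k` such that at every vertex the inflow equals the outflow. -/
structure IsNZFlow (G : SignedGraph) (k : ℕ) (o₁ o₂ : ℕ → Bool) (φ : ℕ → ℤ) : Prop where
  orient : G.IsOrientation o₁ o₂
  nonzero : ∀ e ∈ G.edges, φ e ≠ 0
  bounded : ∀ e ∈ G.edges, |φ e| < (k : ℤ)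
  conserve : ∀ v ∈ G.verts, G.excess o₁ o₂ φ v = 0

/-- `G` admits a nowhere-zero `k`-flow. -/
def HasNZFlow (G : SignedGraph) (k : ℕ) : Prop := ∃ o₁ o₂ φ, G.IsNZFlow k o₁ o₂ φ

/-- `G` is flow-admissible: it admits a nowhere-zero `k`-flow for some `k`. -/
def FlowAdmissible (G : SignedGraph) : Prop := ∃ k, G.HasNZFlow k

/-- `(vs, es)` is a cycle of `G`: distinct vertices `vs = [v₀, …, v_{m-1}]`,
distinct edges `es = [e₀, …, e_{m-1}]`, where `eᵢ` joins `vᵢ` and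
`v_{i+1 (mod m)}`. -/
structure IsCycle (G : SignedGraph) (vs es : List ℕ) : Prop where
  nonempty : es ≠ []
  len : vs.length = es.length
  vnodup : vs.Nodup
  enodup : es.Nodup
  vmem : ∀ v ∈ vs, v ∈ G.verts
  emem : ∀ e ∈ es, e ∈ G.edges
  link : ∀ i < es.length,
    G.Joins (es.getD i 0) (vs.getD i 0) (vs.getD ((i + 1) % vs.length) 0)

/-- The number of negative edges in a list of edges. -/
def negCount (G : SignedGraph) (es : List ℕ) : ℕ :=
  (es.filter fun e => G.sign e = false).length

/-- A balanced cycle: a cycle with an even number of negative edges. -/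
def IsBalancedCycle (G : SignedGraph) (vs es : List ℕ) : Prop :=
  G.IsCycle vs es ∧ Even (G.negCount es)

/-- An unbalanced cycle: a cycle with an odd number of negative edges. -/
def IsUnbalancedCycle (G : SignedGraph) (vs es : List ℕ) : Prop :=
  G.IsCycle vs es ∧ Odd (G.negCount es)

/-- A signed graph is unbalanced if it contains an unbalanced cycle. -/
def IsUnbalanced (G : SignedGraph) : Prop := ∃ vs es, G.IsUnbalancedCycle vs es

/-- `(vs, es)` is a path of `G` (possibly trivial, i.e. a single vertex). -/
structure IsPath (G : SignedGraph) (vs es : List ℕ) : Prop where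
  nonempty : vs ≠ []
  len : vs.length = es.length + 1
  vnodup : vs.Nodup
  enodup : es.Nodup
  vmem : ∀ v ∈ vs, v ∈ G.verts
  emem : ∀ e ∈ es, e ∈ G.edges
  link : ∀ i < es.length, G.Joins (es.getD i 0) (vs.getD i 0) (vs.getD (i + 1) 0)

/-- A barbell: two edge-disjoint unbalanced cycles together with a path,
which either joins two vertex-disjoint cycles and is internally
vertex-disjoint from them, or is the trivial path at the single
common vertex of the two cycles. -/
structure IsBarbell (G : SignedGraph) (vs₁ es₁ vs₂ es₂ pvs pes : List ℕ) : Prop where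
  cyc1 : G.IsUnbalancedCycle vs₁ es₁
  cyc2 : G.IsUnbalancedCycle vs₂ es₂
  edge_disj : ∀ e ∈ es₁, e ∉ es₂
  path : G.IsPath pvs pes
  shape :
    ((∀ v ∈ vs₁, v ∉ vs₂) ∧
      pvs.getD 0 0 ∈ vs₁ ∧ pvs.getD (pvs.length - 1) 0 ∈ vs₂ ∧
      (∀ i, 0 < i → i < pvs.length - 1 → pvs.getD i 0 ∉ vs₁ ∧ pvs.getD i 0 ∉ vs₂)) ∨
    (∃ w, w ∈ vs₁ ∧ w ∈ vs₂ ∧ (∀ v ∈ vs₁, v ∈ vs₂ → v = w) ∧ pvs = [w] ∧ pes = [])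

/-- The edge `e` is contained in a signed circuit (a balanced cycle
or a barbell). -/
def InSignedCircuit (G : SignedGraph) (e : ℕ) : Prop :=
  (∃ vs es, G.IsBalancedCycle vs es ∧ e ∈ es) ∨
  (∃ vs₁ es₁ vs₂ es₂ pvs pes, G.IsBarbell vs₁ es₁ vs₂ es₂ pvs pes ∧
    (e ∈ es₁ ∨ e ∈ es₂ ∨ e ∈ pes))

/-- `H` is a subgraph of `G` (with the same labels, endvertices and signs). -/
def IsSubgraph (H G : SignedGraph) : Prop :=
  H.verts ⊆ G.verts ∧ H.edges ⊆ G.edges ∧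
  ∀ e ∈ H.edges, H.fst e = G.fst e ∧ H.snd e = G.snd e ∧ H.sign e = G.sign e

/-- Switching at a vertex `v`: the signs of all edges incident with `v`
(i.e. with exactly one end at `v`) are inverted. -/
def switchAt (G : SignedGraph) (v : ℕ) : SignedGraph where
  verts := G.verts
  edges := G.edges
  fst := G.fst
  snd := G.snd
  sign := fun e => if xor (G.fst e == v) (G.snd e == v) then !(G.sign e) else G.sign e
  fst_mem := G.fst_mem
  snd_mem := G.snd_mem

/-- Connectedness of a (nonempty) signed graph. -/
def Connected (G : SignedGraph) : Prop :=
  G.verts.Nonempty ∧ ∀ u ∈ G.verts, ∀ v ∈ G.verts, Relation.ReflTransGen G.Adj u v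

/-- Deletion of a vertex together with all incident edges. -/
def deleteVert (G : SignedGraph) (v : ℕ) : SignedGraph where
  verts := G.verts.erase v
  edges := G.edges.filter fun e => G.fst e ≠ v ∧ G.snd e ≠ v
  fst := G.fst
  snd := G.snd
  sign := G.sign
  fst_mem := by
    intro e he
    simp only [Finset.mem_filter] at he
    exact Finset.mem_erase.mpr ⟨he.2.1, G.fst_mem e he.1⟩
  snd_mem := by
    intro e he
    simp only [Finset.mem_filter] at he
    exact Finset.mem_erase.mpr ⟨he.2.2, G.snd_mem e he.1⟩

/-- `G` is 2-connected: it is connected and remains connected after the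
deletion of any single vertex. -/
def TwoConnected (G : SignedGraph) : Prop :=
  G.Connected ∧ ∀ v ∈ G.verts, (G.deleteVert v).Connected

end SignedGraph

/-- A two-terminal signed graph: a signed graph with two distinguished
distinct vertices, the source terminal `s` and the target terminal `t`. -/
structure TTGraph extends SignedGraph where
  s : ℕ
  t : ℕ
  s_mem : s ∈ verts
  t_mem : t ∈ verts
  s_ne_t : s ≠ t

namespace TTGraph

/-- Switching at a vertex of a two-terminal signed graph. -/
def switchAt (G : TTGraph) (v : ℕ) : TTGraph where
  toSignedGraph := G.toSignedGraph.switchAt v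
  s := G.s
  t := G.t
  s_mem := G.s_mem
  t_mem := G.t_mem
  s_ne_t := G.s_ne_t

end TTGraph

/-- Two two-terminal signed graphs are switching equivalent if one is
obtained from the other by a finite sequence of switchings. -/
def SwitchEquiv (G G' : TTGraph) : Prop :=
  Relation.ReflTransGen (fun A B => ∃ v ∈ A.verts, B = A.switchAt v) G G'

/-- `G` is the series connection `S(H₁, H₂)`: `H₁` and `H₂` are subgraphs
of `G` sharing exactly the vertex `H₁.t = H₂.s`, partitioning the edges,
with `G.s = H₁.s` and `G.t = H₂.t`. -/
structure IsSeriesConn2 (G H₁ H₂ : TTGraph) : Prop where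
  sub1 : SignedGraph.IsSubgraph H₁.toSignedGraph G.toSignedGraph
  sub2 : SignedGraph.IsSubgraph H₂.toSignedGraph G.toSignedGraph
  vert_union : H₁.verts ∪ H₂.verts = G.verts
  vert_inter : H₁.verts ∩ H₂.verts = {H₁.t}
  mid : H₁.t = H₂.s
  edge_union : H₁.edges ∪ H₂.edges = G.edges
  edge_disj : Disjoint H₁.edges H₂.edges
  src : G.s = H₁.s
  tgt : G.t = H₂.t

/-- `G` is the parallel connection `P(H₁, H₂)`: `H₁` and `H₂` are subgraphs
of `G` sharing exactly the two terminals, partitioning the edges, with the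
terminals of `G`, `H₁` and `H₂` identified. -/
structure IsParallelConn2 (G H₁ H₂ : TTGraph) : Prop where
  sub1 : SignedGraph.IsSubgraph H₁.toSignedGraph G.toSignedGraph
  sub2 : SignedGraph.IsSubgraph H₂.toSignedGraph G.toSignedGraph
  vert_union : H₁.verts ∪ H₂.verts = G.verts
  vert_inter : H₁.verts ∩ H₂.verts = {H₁.s, H₁.t}
  src_eq : H₁.s = H₂.s
  tgt_eq : H₁.t = H₂.t
  edge_union : H₁.edges ∪ H₂.edges = G.edges
  edge_disj : Disjoint H₁.edges H₂.edges
  src : G.s = H₁.s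
  tgt : G.t = H₁.t

/-- `G` is a (signed) copy of `K₂`: a single edge joining the two terminals. -/
def IsSignedK2 (G : TTGraph) : Prop :=
  G.verts = {G.s, G.t} ∧ ∃ e, G.edges = {e} ∧ G.toSignedGraph.Joins e G.s G.t

/-- Series-parallel two-terminal graphs: obtained from copies of `K₂` by
iterated series and parallel connections. -/
inductive IsSP : TTGraph → Prop
  | k2 {G} : IsSignedK2 G → IsSP G
  | series {G H₁ H₂} : IsSeriesConn2 G H₁ H₂ → IsSP H₁ → IsSP H₂ → IsSP G
  | parallel {G H₁ H₂} : IsParallelConn2 G H₁ H₂ → IsSP H₁ → IsSP H₂ → IsSP G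

/-- `G` is the series connection `S(H₁, …, Hₙ)` of the graphs in the list
(of length at least two). -/
inductive IsSeriesConnList : TTGraph → List TTGraph → Prop
  | two {G H₁ H₂} : IsSeriesConn2 G H₁ H₂ → IsSeriesConnList G [H₁, H₂]
  | cons {G G' H l} : IsSeriesConn2 G H G' → IsSeriesConnList G' l →
      IsSeriesConnList G (H :: l)

/-- `G` is the parallel connection `P(H₁, …, Hₙ)` of the graphs in the list
(of length at least two). -/
inductive IsParallelConnList : TTGraph → List TTGraph → Prop
  | two {G H₁ H₂} : IsParallelConn2 G H₁ H₂ → IsParallelConnList G [H₁, H₂]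
  | cons {G G' H l} : IsParallelConn2 G H G' → IsParallelConnList G' l →
      IsParallelConnList G (H :: l)

/-- `l` is the list of parts of `G` for a series connection: `G` is a series
connection of the series-parallel graphs in `l`, with `l` of maximum length. -/
def IsSeriesPartsOf (G : TTGraph) (l : List TTGraph) : Prop :=
  IsSeriesConnList G l ∧ (∀ H ∈ l, IsSP H) ∧
  ∀ l', IsSeriesConnList G l' → (∀ H ∈ l', IsSP H) → l'.length ≤ l.length

/-- `l` is the list of parts of `G` for a parallel connection. -/
def IsParallelPartsOf (G : TTGraph) (l : List TTGraph) : Prop :=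
  IsParallelConnList G l ∧ (∀ H ∈ l, IsSP H) ∧
  ∀ l', IsParallelConnList G l' → (∀ H ∈ l', IsSP H) → l'.length ≤ l.length

/-- `l` is the list of parts of `G`. -/
def IsPartsOf (G : TTGraph) (l : List TTGraph) : Prop :=
  IsSeriesPartsOf G l ∨ IsParallelPartsOf G l

/-- `H` is a part of `G`. -/
def IsPart (H G : TTGraph) : Prop := ∃ l, IsPartsOf G l ∧ H ∈ l

/-- `H` is a piece of `G`: there is a sequence `H = H₀, H₁, …, Hₘ = G`
where each `Hⱼ` is a part of `H_{j+1}`; in particular `G` is a piece of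
itself. -/
def IsPiece (H G : TTGraph) : Prop := Relation.ReflTransGen IsPart H G

/-- `G` is of series type: it is a series connection of its parts. -/
def IsSeriesType (G : TTGraph) : Prop := ∃ l, IsSeriesPartsOf G l

/-- `G` is of parallel type: it is a parallel connection of its parts. -/
def IsParallelType (G : TTGraph) : Prop := ∃ l, IsParallelPartsOf G l

/-- `H` is an endpart of `G`: the first or last part of a series
decomposition of `G` into its parts. -/
def IsEndpartOf (H G : TTGraph) : Prop :=
  ∃ l, IsSeriesPartsOf G l ∧ (l.head? = some H ∨ l.getLast? = some H)

/-- `DepthLe G d`: the depth of `G` is at most `d`.  The depth of a signed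
`K₂` is `0`; otherwise it is `1` plus the maximum depth of a part. -/
inductive DepthLe : TTGraph → ℕ → Prop
  | k2 {G d} : IsSignedK2 G → DepthLe G d
  | step {G l d} : IsPartsOf G l → (∀ H ∈ l, DepthLe H d) → DepthLe G (d + 1)

/-- `HasDepth G d`: the depth of `G` is exactly `d`, i.e. `d` is the least
upper bound in the recursive definition of depth. -/
def HasDepth (G : TTGraph) (d : ℕ) : Prop :=
  DepthLe G d ∧ ∀ d' < d, ¬ DepthLe G d'

/-- `G` is reduced: each non-terminal vertex has degree at least `3`, and
no two parallel edges have the same sign. -/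
def IsReducedGraph (G : TTGraph) : Prop :=
  (∀ v ∈ G.verts, v ≠ G.s → v ≠ G.t → 3 ≤ G.toSignedGraph.degree v) ∧
  (∀ e ∈ G.edges, ∀ f ∈ G.edges, G.toSignedGraph.Parallel e f → G.sign e ≠ G.sign f)

/-- `G` is a positive `K₂` (denoted `K₂⁺`). -/
def IsPositiveK2 (G : TTGraph) : Prop :=
  IsSignedK2 G ∧ ∀ e ∈ G.edges, G.sign e = true

/-- `G` is the unbalanced 2-cycle `D`: two parallel edges of opposite signs
joining the two terminals. -/
def IsUnbalanced2Cycle (G : TTGraph) : Prop :=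
  G.verts = {G.s, G.t} ∧ ∃ e f, e ≠ f ∧ G.edges = {e, f} ∧
    G.toSignedGraph.Joins e G.s G.t ∧ G.toSignedGraph.Joins f G.s G.t ∧
    G.sign e ≠ G.sign f

/-- `G` is a string: a copy of `K₂⁺` or `D`, or a series connection of copies
of `K₂⁺` and `D`, in which every non-terminal vertex lies in a 2-cycle. -/
def IsString (G : TTGraph) : Prop :=
  (IsPositiveK2 G ∨ IsUnbalanced2Cycle G ∨
    ∃ l, IsSeriesConnList G l ∧ ∀ H ∈ l, IsPositiveK2 H ∨ IsUnbalanced2Cycle H) ∧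
  ∀ v ∈ G.verts, v ≠ G.s → v ≠ G.t → G.toSignedGraph.In2Cycle v

/-- `G` is a necklace: a parallel connection of two strings, at least one of
which is nontrivial (has more than two vertices). -/
def IsNecklace (G : TTGraph) : Prop :=
  ∃ H₁ H₂, IsParallelConn2 G H₁ H₂ ∧ IsString H₁ ∧ IsString H₂ ∧
    (2 < H₁.verts.card ∨ 2 < H₂.verts.card)

/-- `(o₁, o₂, φ)` is an `(a,b)`-pseudoflow on the two-terminal signed graph
`G`: like a nowhere-zero 6-flow, except that at the source terminal the
outflow exceeds the inflow by `a`, and at the target terminal the inflow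
exceeds the outflow by `b`. -/
structure IsPseudoflow (G : TTGraph) (a b : ℤ) (o₁ o₂ : ℕ → Bool) (φ : ℕ → ℤ) :
    Prop where
  orient : G.toSignedGraph.IsOrientation o₁ o₂
  nonzero : ∀ e ∈ G.edges, φ e ≠ 0
  bounded : ∀ e ∈ G.edges, |φ e| < 6
  conserve : ∀ v ∈ G.verts, v ≠ G.s → v ≠ G.t →
    G.toSignedGraph.excess o₁ o₂ φ v = 0
  out_s : G.toSignedGraph.excess o₁ o₂ φ G.s = -a
  in_t : G.toSignedGraph.excess o₁ o₂ φ G.t = b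

/-- `G` admits an `(a,b)`-pseudoflow. -/
def HasPseudoflow (G : TTGraph) (a b : ℤ) : Prop :=
  ∃ o₁ o₂ φ, IsPseudoflow G a b o₁ o₂ φ

/-- `I₅ = {-5, …, 5}`. -/
noncomputable def I5 : Finset ℤ := Finset.Icc (-5) 5

/-- The pair `(a,b)` is valid for `G`: `a ≠ 0` or `deg(s) ≥ 2`, and
`b ≠ 0` or `deg(t) ≥ 2`. -/
def ValidPair (G : TTGraph) (a b : ℤ) : Prop :=
  (a ≠ 0 ∨ 2 ≤ G.toSignedGraph.degree G.s) ∧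
  (b ≠ 0 ∨ 2 ≤ G.toSignedGraph.degree G.t)

/-- `G` is a flow-admissible signed series-parallel graph with no
nowhere-zero 6-flow, with the minimum number of edges among all such
graphs. -/
def MinCounterexample (G : TTGraph) : Prop :=
  IsSP G ∧ G.toSignedGraph.FlowAdmissible ∧ ¬ G.toSignedGraph.HasNZFlow 6 ∧
  ∀ G' : TTGraph, IsSP G' → G'.toSignedGraph.FlowAdmissible →
    ¬ G'.toSignedGraph.HasNZFlow 6 → G.edges.card ≤ G'.edges.card

/-- `W` is a copy of `S(K₂⁺, D, K₂⁺)`. -/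
def IsSK2DK2 (W : TTGraph) : Prop :=
  ∃ A B C, IsSeriesConnList W [A, B, C] ∧ IsPositiveK2 A ∧
    IsUnbalanced2Cycle B ∧ IsPositiveK2 C

/-- `G'` is obtained from `G` by replacing the piece `H` (with terminals
`H.s`, `H.t`) by the two-terminal graph `W`: the edges and non-terminal
vertices of `H` are removed, `W` (whose new vertices are fresh) is added,
and its terminals are identified with the terminals of `H`. -/
def IsReplacement (G H G' W : TTGraph) : Prop :=
  W.s = H.s ∧ W.t = H.t ∧ G'.s = G.s ∧ G'.t = G.t ∧
  W.verts ∩ G.verts ⊆ {H.s, H.t} ∧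
  G'.verts = (G.verts \ (H.verts \ {H.s, H.t})) ∪ W.verts ∧
  G'.edges = (G.edges \ H.edges) ∪ W.edges ∧
  Disjoint (G.edges \ H.edges) W.edges ∧
  (∀ e ∈ G.edges \ H.edges,
    G'.fst e = G.fst e ∧ G'.snd e = G.snd e ∧ G'.sign e = G.sign e) ∧
  SignedGraph.IsSubgraph W.toSignedGraph G'.toSignedGraph

/-!
An endpart is neither a series connection (that would contradict the maximality of the
decomposition into parts) nor a balanced `K₂`, so it is an unbalanced parallel connection
`P(H₁, H₂)`, in which every edge lies on an unbalanced cycle. For this one shows by induction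
that in an unbalanced series-parallel graph every edge lies on an unbalanced cycle or on two
`s`–`t` paths of different parity; a terminal path of `H₁` through the edge then closes up with
a terminal path of `H₂` of the right parity to an unbalanced cycle. When both sides are balanced,
their balancing bipartitions must disagree on one terminal, which makes every such pair odd.

Write `G = S(G₁, X)` with `G₁` the first part. Every edge of `G₁` lies on an unbalanced cycle of
`G₁` joined by a path to `G₁.t`; every edge of `X` lies on an unbalanced cycle of the last part,
or on a path through the middle parts, joined by a path to `X.s`. Two such lollipops glue at
the cut vertex `G₁.t = X.s` to a barbell.
-/

lemma List.getD_mem_of_lt {α : Type*} {l : List α} {i : ℕ} (d : α) (hi : i < l.length) :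
    l.getD i d ∈ l := by
  rw [List.getD_eq_getElem _ _ hi]
  exact List.getElem_mem hi

lemma List.Nodup.getD_inj {α : Type*} {l : List α} (hnd : l.Nodup) {i j : ℕ} {d : α}
    (hi : i < l.length) (hj : j < l.length) (h : l.getD i d = l.getD j d) : i = j := by
  rwa [List.getD_eq_getElem _ _ hi, List.getD_eq_getElem _ _ hj, hnd.getElem_inj_iff] at h

namespace SignedGraph

variable {G H : SignedGraph}

lemma Joins.symm {e u v : ℕ} (h : G.Joins e u v) : G.Joins e v u := Or.symm h

lemma IsSubgraph.trans {K : SignedGraph} (h₁ : K.IsSubgraph H) (h₂ : H.IsSubgraph G) :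
    K.IsSubgraph G := by
  refine ⟨h₁.1.trans h₂.1, h₁.2.1.trans h₂.2.1, fun e he => ?_⟩
  obtain ⟨a₁, a₂, a₃⟩ := h₁.2.2 e he
  obtain ⟨b₁, b₂, b₃⟩ := h₂.2.2 e (h₁.2.1 he)
  exact ⟨a₁.trans b₁, a₂.trans b₂, a₃.trans b₃⟩

lemma IsSubgraph.joins (hsub : H.IsSubgraph G) {e u v : ℕ} (he : e ∈ H.edges)
    (h : H.Joins e u v) : G.Joins e u v := by
  obtain ⟨hfst, hsnd, -⟩ := hsub.2.2 e he
  unfold Joins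
  rwa [← hfst, ← hsnd]

lemma IsSubgraph.negCount_eq (hsub : H.IsSubgraph G) {es : List ℕ}
    (hes : ∀ e ∈ es, e ∈ H.edges) : G.negCount es = H.negCount es := by
  unfold negCount
  congr 1
  exact List.filter_congr fun e he => by rw [(hsub.2.2 e (hes e he)).2.2]

lemma negCount_append (l₁ l₂ : List ℕ) :
    G.negCount (l₁ ++ l₂) = G.negCount l₁ + G.negCount l₂ := by
  simp [negCount, List.filter_append]

lemma negCount_reverse (l : List ℕ) : G.negCount l.reverse = G.negCount l := by
  simp [negCount, List.filter_reverse]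

lemma negCount_cons (e : ℕ) (l : List ℕ) :
    G.negCount (e :: l) = G.negCount l + if G.sign e = false then 1 else 0 := by
  by_cases he : G.sign e = false <;> simp [negCount, he]

inductive IsWalk (G : SignedGraph) : List ℕ → List ℕ → Prop
  | nil (v : ℕ) : G.IsWalk [v] []
  | cons {u v : ℕ} {vs es : List ℕ} {e : ℕ} :
      G.Joins e u v → G.IsWalk (v :: vs) es → G.IsWalk (u :: v :: vs) (e :: es)

namespace IsWalk

variable {vs es : List ℕ}

lemma ne_nil (h : G.IsWalk vs es) : vs ≠ [] := by
  cases h <;> simp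

lemma length_eq (h : G.IsWalk vs es) : vs.length = es.length + 1 := by
  induction h with
  | nil => rfl
  | cons _ _ ih => simpa using ih

lemma fst_mem_and_snd_mem (h : G.IsWalk vs es) {e : ℕ} (he : e ∈ es) :
    G.fst e ∈ vs ∧ G.snd e ∈ vs := by
  induction h with
  | nil => simp at he
  | cons hj _ ih =>
    rcases List.mem_cons.mp he with rfl | he
    · rcases hj with ⟨h₁, h₂⟩ | ⟨h₁, h₂⟩ <;> simp [h₁, h₂]
    · exact (ih he).imp (List.mem_cons_of_mem _) (List.mem_cons_of_mem _)

lemma nodup_edges (h : G.IsWalk vs es) (hnd : vs.Nodup) : es.Nodup := by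
  induction h with
  | nil => simp
  | @cons u v vs es e hj hw ih =>
    refine List.nodup_cons.mpr ⟨fun he => ?_, ih hnd.of_cons⟩
    have hu : u ∉ v :: vs := (List.nodup_cons.mp hnd).1
    rcases hj with ⟨h₁, -⟩ | ⟨-, h₂⟩
    · exact hu (h₁ ▸ (hw.fst_mem_and_snd_mem he).1)
    · exact hu (h₂ ▸ (hw.fst_mem_and_snd_mem he).2)

lemma append {vs₁ es₁ vs₂ es₂ : List ℕ} {b : ℕ} (h₁ : G.IsWalk vs₁ es₁)
    (hb : vs₁.getLast? = some b) (h₂ : G.IsWalk (b :: vs₂) es₂) :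
    G.IsWalk (vs₁ ++ vs₂) (es₁ ++ es₂) := by
  induction h₁ with
  | nil v =>
    obtain rfl : v = b := by simpa using hb
    exact h₂
  | cons hj _ ih => exact cons hj (ih (by simpa [List.getLast?_cons_cons] using hb))

lemma reverse (h : G.IsWalk vs es) : G.IsWalk vs.reverse es.reverse := by
  induction h with
  | nil v => exact nil v
  | cons hj _ ih => simpa using ih.append (by simp) (cons hj.symm (nil _))

lemma exists_prefix (h : G.IsWalk vs es) (P : ℕ → Prop) (hP : ∃ x ∈ vs, P x) :
    ∃ vs' es' x, G.IsWalk vs' es' ∧ vs' <+: vs ∧ es' <+: es ∧ vs'.head? = vs.head? ∧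
      vs'.getLast? = some x ∧ P x ∧ ∀ v ∈ vs', P v → v = x := by
  induction h with
  | nil v =>
    obtain ⟨x, hx, hPx⟩ := hP
    obtain rfl : x = v := by simpa using hx
    exact ⟨[x], [], x, nil x, List.prefix_rfl, List.prefix_rfl, rfl, rfl, hPx, by simp⟩
  | @cons u v vs es e hj hw ih =>
    by_cases hu : P u
    · exact ⟨[u], [], u, nil u, by simp, by simp, rfl, rfl, hu, by simp⟩
    obtain ⟨ws, fs, x, hw', hpv, hpe, hhead, hlast, hPx, huniq⟩ :=
      ih (by simpa [hu] using hP)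
    obtain ⟨ws, rfl⟩ : ∃ ws', ws = v :: ws' := List.head?_eq_some_iff.mp hhead
    refine ⟨u :: v :: ws, e :: fs, x, cons hj hw', List.cons_prefix_cons.mpr ⟨rfl, hpv⟩,
      List.cons_prefix_cons.mpr ⟨rfl, hpe⟩, rfl, by simpa [List.getLast?_cons_cons] using hlast,
      hPx, ?_⟩
    rintro w (_ | ⟨_, hw⟩) hPw
    · exact absurd hPw hu
    · exact huniq w hw hPw

end IsWalk

lemma isWalk_iff_getD {vs es : List ℕ} :
    G.IsWalk vs es ↔ vs.length = es.length + 1 ∧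
      ∀ i < es.length, G.Joins (es.getD i 0) (vs.getD i 0) (vs.getD (i + 1) 0) := by
  constructor
  · intro h
    refine ⟨h.length_eq, ?_⟩
    induction h with
    | nil => simp
    | cons hj _ ih =>
      rintro (_ | i) hi
      · simpa using hj
      · simpa using ih i (by simpa using hi)
  · rintro ⟨hlen, hlink⟩
    induction vs generalizing es with
    | nil => simp at hlen
    | cons u vs ih =>
      match vs, es with
      | [], [] => exact .nil u
      | v :: vs, e :: es =>
        exact .cons (by simpa using hlink 0 (by simp))
          (ih (by simpa using hlen) fun i hi => by simpa using hlink (i + 1) (by simpa using hi))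
      | [], _ :: _ | _ :: _, [] => simp at hlen

lemma IsSubgraph.isWalk {vs es : List ℕ} (hsub : H.IsSubgraph G) (h : H.IsWalk vs es)
    (hes : ∀ e ∈ es, e ∈ H.edges) : G.IsWalk vs es := by
  induction h with
  | nil v => exact .nil v
  | cons hj _ ih =>
    exact .cons (hsub.joins (hes _ (by simp)) hj) (ih fun e he => hes e (by simp [he]))

structure IsPathBetween (G : SignedGraph) (a b : ℕ) (vs es : List ℕ) : Prop where
  isWalk : G.IsWalk vs es
  head_eq : vs.head? = some a
  last_eq : vs.getLast? = some b
  nodup : vs.Nodup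
  verts_mem : ∀ v ∈ vs, v ∈ G.verts
  edges_mem : ∀ e ∈ es, e ∈ G.edges

namespace IsPathBetween

variable {a b c : ℕ} {vs es : List ℕ}

lemma left_mem (h : G.IsPathBetween a b vs es) : a ∈ vs := List.mem_of_mem_head? h.head_eq

lemma isPath (h : G.IsPathBetween a b vs es) : G.IsPath vs es :=
  ⟨h.isWalk.ne_nil, h.isWalk.length_eq, h.nodup, h.isWalk.nodup_edges h.nodup, h.verts_mem,
    h.edges_mem, (isWalk_iff_getD.mp h.isWalk).2⟩

lemma getD_zero (h : G.IsPathBetween a b vs es) : vs.getD 0 0 = a := by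
  obtain ⟨t, rfl⟩ := List.head?_eq_some_iff.mp h.head_eq
  rfl

lemma getD_length_sub_one (h : G.IsPathBetween a b vs es) : vs.getD (vs.length - 1) 0 = b := by
  obtain ⟨t, rfl⟩ := List.getLast?_eq_some_iff.mp h.last_eq
  simp

lemma eq_singleton (h : G.IsPathBetween a a vs es) : vs = [a] ∧ es = [] := by
  obtain ⟨t, rfl⟩ := List.head?_eq_some_iff.mp h.head_eq
  cases t with
  | nil => cases h.isWalk; exact ⟨rfl, rfl⟩
  | cons v t =>
    have ha : a ∈ v :: t :=
      List.mem_of_getLast? (by simpa [List.getLast?_cons_cons] using h.last_eq)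
    exact absurd ha (List.nodup_cons.mp h.nodup).1

lemma exists_eq_cons_append (h : G.IsPathBetween a b vs es) (hab : a ≠ b) :
    ∃ m, vs = a :: (m ++ [b]) := by
  obtain ⟨t, rfl⟩ := List.head?_eq_some_iff.mp h.head_eq
  cases t with
  | nil => exact absurd (by simpa using h.last_eq) hab
  | cons v t =>
    obtain ⟨m, hm⟩ := List.getLast?_eq_some_iff.mp
      (by simpa [List.getLast?_cons_cons] using h.last_eq : (v :: t).getLast? = some b)
    exact ⟨m, by rw [hm]⟩

lemma edges_ne_nil (h : G.IsPathBetween a b vs es) (hab : a ≠ b) : es ≠ [] := by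
  rintro rfl
  cases h.isWalk
  exact hab (Option.some.inj (h.head_eq.symm.trans h.last_eq))

lemma append {vs₂ es₂ : List ℕ} (h₁ : G.IsPathBetween a b vs es)
    (h₂ : G.IsPathBetween b c vs₂ es₂) (hint : ∀ v ∈ vs, v ∈ vs₂ → v = b) :
    G.IsPathBetween a c (vs ++ vs₂.tail) (es ++ es₂) := by
  obtain ⟨t, rfl⟩ := List.head?_eq_some_iff.mp h₂.head_eq
  have hbt : b ∉ t := (List.nodup_cons.mp h₂.nodup).1
  refine ⟨h₁.isWalk.append h₁.last_eq h₂.isWalk, ?_, ?_, ?_, ?_, ?_⟩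
  · rw [List.head?_append_of_ne_nil _ h₁.isWalk.ne_nil]; exact h₁.head_eq
  · cases t with
    | nil => simpa using h₁.last_eq.trans (by simpa using h₂.last_eq)
    | cons w t => simpa [List.getLast?_cons_cons] using h₂.last_eq
  · refine List.nodup_append.mpr ⟨h₁.nodup, (List.nodup_cons.mp h₂.nodup).2, ?_⟩
    rintro v hv w hw rfl
    exact hbt (hint v hv (List.mem_cons_of_mem _ hw) ▸ hw)
  · simp only [List.tail_cons, List.mem_append]
    rintro v (hv | hv)
    exacts [h₁.verts_mem v hv, h₂.verts_mem v (List.mem_cons_of_mem _ hv)]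
  · simp only [List.mem_append]
    rintro e (he | he)
    exacts [h₁.edges_mem e he, h₂.edges_mem e he]

lemma reverse (h : G.IsPathBetween a b vs es) : G.IsPathBetween b a vs.reverse es.reverse :=
  ⟨h.isWalk.reverse, by simpa using h.last_eq, by simpa using h.head_eq,
    List.nodup_reverse.mpr h.nodup, fun v hv => h.verts_mem v (List.mem_reverse.mp hv),
    fun e he => h.edges_mem e (List.mem_reverse.mp he)⟩

lemma exists_prefix (h : G.IsPathBetween a b vs es) (P : ℕ → Prop) (hP : ∃ x ∈ vs, P x) :
    ∃ x vs' es', G.IsPathBetween a x vs' es' ∧ P x ∧ ∀ v ∈ vs', P v → v = x := by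
  obtain ⟨vs', es', x, hw, hpv, hpe, hhead, hlast, hPx, huniq⟩ := h.isWalk.exists_prefix P hP
  exact ⟨x, vs', es', ⟨hw, hhead.trans h.head_eq, hlast, h.nodup.sublist hpv.sublist,
    fun v hv => h.verts_mem v (hpv.sublist.mem hv),
    fun e he => h.edges_mem e (hpe.sublist.mem he)⟩, hPx, huniq⟩

end IsPathBetween

lemma IsSubgraph.isPathBetween {a b : ℕ} {vs es : List ℕ} (hsub : H.IsSubgraph G)
    (h : H.IsPathBetween a b vs es) : G.IsPathBetween a b vs es :=
  ⟨hsub.isWalk h.isWalk h.edges_mem, h.head_eq, h.last_eq, h.nodup,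
    fun v hv => hsub.1 (h.verts_mem v hv), fun e he => hsub.2.1 (h.edges_mem e he)⟩

section

variable {vs es : List ℕ}

lemma getD_append_headI_succ {i : ℕ} (hi : i < vs.length) :
    (vs ++ [vs.headI]).getD (i + 1) 0 = vs.getD ((i + 1) % vs.length) 0 := by
  rcases (Nat.succ_le_of_lt hi).lt_or_eq with hlt | heq
  · rw [List.getD_append _ _ _ _ hlt, Nat.mod_eq_of_lt hlt]
  · cases vs with
    | nil => simp at hi
    | cons u t =>
      obtain rfl : i = t.length := by simpa using heq
      simp [List.getD_eq_getElem?_getD]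

lemma IsCycle.isWalk (h : G.IsCycle vs es) : G.IsWalk (vs ++ [vs.headI]) es := by
  refine isWalk_iff_getD.mpr ⟨by simp [h.len], fun i hi => ?_⟩
  have hi' : i < vs.length := h.len ▸ hi
  rw [List.getD_append _ _ _ _ hi', getD_append_headI_succ hi']
  exact h.link i hi

lemma IsCycle.of_isWalk (hw : G.IsWalk (vs ++ [vs.headI]) es) (hne : es ≠ []) (hvs : vs.Nodup)
    (hes : es.Nodup) (hvmem : ∀ v ∈ vs, v ∈ G.verts) (hemem : ∀ e ∈ es, e ∈ G.edges) :
    G.IsCycle vs es := by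
  obtain ⟨hlen, hlink⟩ := isWalk_iff_getD.mp hw
  have hlen' : vs.length = es.length := by simpa using hlen
  refine ⟨hne, hlen', hvs, hes, hvmem, hemem, fun i hi => ?_⟩
  have hi' : i < vs.length := hlen' ▸ hi
  rw [← List.getD_append _ [vs.headI] _ _ hi', ← getD_append_headI_succ hi']
  exact hlink i hi

lemma IsCycle.ne_nil (h : G.IsCycle vs es) : vs ≠ [] := by
  rintro rfl
  exact h.nonempty (List.length_eq_zero_iff.mp h.len.symm)

lemma IsCycle.fst_mem (h : G.IsCycle vs es) {e : ℕ} (he : e ∈ es) : G.fst e ∈ vs := by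
  have hmem := (h.isWalk.fst_mem_and_snd_mem he).1
  rw [List.mem_append, List.mem_singleton] at hmem
  obtain ⟨u, t, rfl⟩ := List.exists_cons_of_ne_nil h.ne_nil
  exact hmem.elim id fun h => by rw [h]; exact List.mem_cons_self

lemma IsSubgraph.isCycle (hsub : H.IsSubgraph G) (h : H.IsCycle vs es) : G.IsCycle vs es :=
  ⟨h.nonempty, h.len, h.vnodup, h.enodup, fun v hv => hsub.1 (h.vmem v hv),
    fun e he => hsub.2.1 (h.emem e he),
    fun i hi => hsub.joins (h.emem _ (List.getD_mem_of_lt 0 hi)) (h.link i hi)⟩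

lemma IsSubgraph.isUnbalancedCycle (hsub : H.IsSubgraph G) (h : H.IsUnbalancedCycle vs es) :
    G.IsUnbalancedCycle vs es :=
  ⟨hsub.isCycle h.1, by rw [hsub.negCount_eq h.1.emem]; exact h.2⟩

lemma IsSubgraph.isUnbalanced (hsub : H.IsSubgraph G) (h : H.IsUnbalanced) : G.IsUnbalanced :=
  let ⟨vs, es, hC⟩ := h
  ⟨vs, es, hsub.isUnbalancedCycle hC⟩

lemma IsPathBetween.isCycle_append_reverse {a b : ℕ} {vs₁ es₁ vs₂ es₂ : List ℕ}
    (h₁ : G.IsPathBetween a b vs₁ es₁) (h₂ : G.IsPathBetween a b vs₂ es₂) (hab : a ≠ b)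
    (hint : ∀ v ∈ vs₁, v ∈ vs₂ → v = a ∨ v = b) (hdisj : ∀ e ∈ es₁, e ∉ es₂) :
    ∃ vs, G.IsCycle vs (es₁ ++ es₂.reverse) := by
  obtain ⟨m, rfl⟩ := h₂.exists_eq_cons_append hab
  obtain ⟨t, rfl⟩ := List.head?_eq_some_iff.mp h₁.head_eq
  have hnd₂ := h₂.nodup
  simp only [List.nodup_cons, List.nodup_append, List.mem_append, List.mem_singleton] at hnd₂
  refine ⟨a :: t ++ m.reverse, IsCycle.of_isWalk ?_ ?_ ?_ ?_ ?_ ?_⟩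
  · have hw₂ : G.IsWalk (b :: (m.reverse ++ [a])) es₂.reverse := by
      simpa using h₂.reverse.isWalk
    simpa using h₁.isWalk.append h₁.last_eq hw₂
  · intro h
    have := h₂.isWalk.length_eq
    simp_all
  · refine List.nodup_append.mpr ⟨h₁.nodup, List.nodup_reverse.mpr hnd₂.2.1, ?_⟩
    rintro v hv w hw rfl
    have hw' : v ∈ m := List.mem_reverse.mp hw
    rcases hint v hv (by simp [hw']) with rfl | rfl
    · exact hnd₂.1 (Or.inl hw')
    · exact hnd₂.2.2.2 v hw' v rfl rfl
  · refine List.nodup_append.mpr ⟨h₁.isWalk.nodup_edges h₁.nodup,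
      List.nodup_reverse.mpr (h₂.isWalk.nodup_edges h₂.nodup), ?_⟩
    rintro e he f hf rfl
    exact hdisj e he (List.mem_reverse.mp hf)
  · simp only [List.mem_append, List.mem_reverse]
    rintro v (hv | hv)
    exacts [h₁.verts_mem v hv, h₂.verts_mem v (by simp [hv])]
  · simp only [List.mem_append, List.mem_reverse]
    rintro e (he | he)
    exacts [h₁.edges_mem e he, h₂.edges_mem e he]

end

/-- Such a bipartition exists if and only if `G` is balanced (Harary). -/
def IsBalancingPartition (G : SignedGraph) (κ : ℕ → Bool) : Prop :=
  ∀ e ∈ G.edges, G.sign e = (κ (G.fst e) == κ (G.snd e))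

namespace IsBalancingPartition

variable {κ : ℕ → Bool}

lemma sign_eq (hκ : G.IsBalancingPartition κ) {e u v : ℕ} (he : e ∈ G.edges)
    (hj : G.Joins e u v) : G.sign e = (κ u == κ v) := by
  rcases hj with ⟨h₁, h₂⟩ | ⟨h₁, h₂⟩
  · rw [hκ e he, h₁, h₂]
  · rw [hκ e he, h₁, h₂, Bool.beq_comm]

lemma even_negCount_iff (hκ : G.IsBalancingPartition κ) {vs es : List ℕ} (hw : G.IsWalk vs es)
    (hes : ∀ e ∈ es, e ∈ G.edges) {a b : ℕ} (ha : vs.head? = some a)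
    (hb : vs.getLast? = some b) : Even (G.negCount es) ↔ κ a = κ b := by
  induction hw generalizing a with
  | nil v =>
    obtain rfl : v = a := by simpa using ha
    obtain rfl : v = b := by simpa using hb
    simp [negCount]
  | @cons u v vs es e hj _ ih =>
    obtain rfl : u = a := by simpa using ha
    have ih' := ih (fun f hf => hes f (by simp [hf])) rfl
      (by simpa [List.getLast?_cons_cons] using hb)
    rw [negCount_cons, hκ.sign_eq (hes e (by simp)) hj]
    cases hu : κ u <;> cases hv : κ v <;> cases hb : κ b <;> simp_all [Nat.even_add_one]

lemma not_isUnbalanced (hκ : G.IsBalancingPartition κ) : ¬ G.IsUnbalanced := by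
  rintro ⟨vs, es, hC, hodd⟩
  obtain ⟨u, t, rfl⟩ := List.exists_cons_of_ne_nil hC.ne_nil
  exact Nat.not_even_iff_odd.mpr hodd
    ((hκ.even_negCount_iff hC.isWalk hC.emem rfl (List.getLast?_concat ..)).mpr rfl)

lemma exists_apply_eq (hκ : G.IsBalancingPartition κ) (x : ℕ) (c : Bool) :
    ∃ κ', G.IsBalancingPartition κ' ∧ κ' x = c := by
  by_cases hx : κ x = c
  · exact ⟨κ, hκ, hx⟩
  · refine ⟨fun v => !κ v, fun e he => ?_, by cases κ x <;> cases c <;> simp_all⟩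
    dsimp only
    rw [hκ e he]
    cases κ (G.fst e) <;> cases κ (G.snd e) <;> rfl

lemma piecewise {A B : SignedGraph} (hA : A.IsSubgraph G) (hB : B.IsSubgraph G)
    (hedges : A.edges ∪ B.edges = G.edges) {κA κB : ℕ → Bool} (hκA : A.IsBalancingPartition κA)
    (hκB : B.IsBalancingPartition κB) (hagree : ∀ v ∈ A.verts, v ∈ B.verts → κA v = κB v) :
    G.IsBalancingPartition fun v => if v ∈ A.verts then κA v else κB v := by
  intro e he
  dsimp only
  rcases Finset.mem_union.mp (hedges ▸ he) with he | he
  · obtain ⟨hf, hs, hg⟩ := hA.2.2 e he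
    rw [← hf, ← hs, ← hg, if_pos (A.fst_mem e he), if_pos (A.snd_mem e he)]
    exact hκA e he
  · obtain ⟨hf, hs, hg⟩ := hB.2.2 e he
    have key : ∀ v ∈ B.verts, (if v ∈ A.verts then κA v else κB v) = κB v := fun v hv => by
      split_ifs with hvA
      exacts [hagree v hvA hv, rfl]
    rw [← hf, ← hs, ← hg, key _ (B.fst_mem e he), key _ (B.snd_mem e he)]
    exact hκB e he

end IsBalancingPartition

lemma IsPathBetween.even_negCount_iff {κ : ℕ → Bool} {a b : ℕ} {vs es : List ℕ}
    (hp : G.IsPathBetween a b vs es) (hκ : G.IsBalancingPartition κ) :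
    Even (G.negCount es) ↔ κ a = κ b :=
  hκ.even_negCount_iff hp.isWalk hp.edges_mem hp.head_eq hp.last_eq

def InUnbalancedCycle (G : SignedGraph) (e : ℕ) : Prop :=
  ∃ vs es, G.IsUnbalancedCycle vs es ∧ e ∈ es

lemma IsSubgraph.inUnbalancedCycle (hsub : H.IsSubgraph G)
    {e : ℕ} (h : H.InUnbalancedCycle e) : G.InUnbalancedCycle e :=
  let ⟨vs, es, hC, he⟩ := h
  ⟨vs, es, hsub.isUnbalancedCycle hC, he⟩

structure IsLollipop (G : SignedGraph) (a x : ℕ) (vsC esC vs es : List ℕ) : Prop where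
  cycle : G.IsUnbalancedCycle vsC esC
  path : G.IsPathBetween a x vs es
  mem : x ∈ vsC
  eq_of_mem : ∀ v ∈ vs, v ∈ vsC → v = x

def InLollipop (G : SignedGraph) (a e : ℕ) : Prop :=
  ∃ x vsC esC vs es, G.IsLollipop a x vsC esC vs es ∧ (e ∈ esC ∨ e ∈ es)

end SignedGraph

open SignedGraph

namespace IsSeriesConn2

variable {G H₁ H₂ : TTGraph}

lemma eq_of_mem (hc : IsSeriesConn2 G H₁ H₂) {v : ℕ} (h₁ : v ∈ H₁.verts) (h₂ : v ∈ H₂.verts) :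
    v = H₁.t := by
  simpa [hc.vert_inter] using Finset.mem_inter.mpr ⟨h₁, h₂⟩

lemma isPathBetween_append (hc : IsSeriesConn2 G H₁ H₂) {a b : ℕ} {vs₁ es₁ vs₂ es₂ : List ℕ}
    (hp : H₁.IsPathBetween a H₁.t vs₁ es₁) (hq : H₂.IsPathBetween H₂.s b vs₂ es₂) :
    G.IsPathBetween a b (vs₁ ++ vs₂.tail) (es₁ ++ es₂) :=
  (hc.sub1.isPathBetween hp).append (hc.mid ▸ hc.sub2.isPathBetween hq)
    fun _ hv hv' => hc.eq_of_mem (hp.verts_mem _ hv) (hq.verts_mem _ hv')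

lemma negCount_append (hc : IsSeriesConn2 G H₁ H₂) {es₁ es₂ : List ℕ}
    (hes₁ : ∀ e ∈ es₁, e ∈ H₁.edges) (hes₂ : ∀ e ∈ es₂, e ∈ H₂.edges) :
    G.negCount (es₁ ++ es₂) = H₁.negCount es₁ + H₂.negCount es₂ := by
  rw [SignedGraph.negCount_append, hc.sub1.negCount_eq hes₁, hc.sub2.negCount_eq hes₂]

lemma exists_balancingPartition (hc : IsSeriesConn2 G H₁ H₂)
    (h₁ : ∃ κ, H₁.IsBalancingPartition κ) (h₂ : ∃ κ, H₂.IsBalancingPartition κ) :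
    ∃ κ, G.IsBalancingPartition κ := by
  obtain ⟨κ₁, hκ₁⟩ := h₁
  obtain ⟨κ₂, hκ₂⟩ := h₂
  obtain ⟨κ₂, hκ₂, hmid⟩ := hκ₂.exists_apply_eq H₁.t (κ₁ H₁.t)
  exact ⟨_, hκ₁.piecewise hc.sub1 hc.sub2 hc.edge_union hκ₂ fun v hv₁ hv₂ => by
    rw [hc.eq_of_mem hv₁ hv₂, hmid]⟩

end IsSeriesConn2

namespace IsParallelConn2

variable {G H₁ H₂ : TTGraph}

lemma symm (hc : IsParallelConn2 G H₁ H₂) : IsParallelConn2 G H₂ H₁ where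
  sub1 := hc.sub2
  sub2 := hc.sub1
  vert_union := by rw [Finset.union_comm, hc.vert_union]
  vert_inter := by rw [Finset.inter_comm, hc.vert_inter, hc.src_eq, hc.tgt_eq]
  src_eq := hc.src_eq.symm
  tgt_eq := hc.tgt_eq.symm
  edge_union := by rw [Finset.union_comm, hc.edge_union]
  edge_disj := hc.edge_disj.symm
  src := hc.src.trans hc.src_eq
  tgt := hc.tgt.trans hc.tgt_eq

lemma eq_or_eq_of_mem (hc : IsParallelConn2 G H₁ H₂) {v : ℕ} (h₁ : v ∈ H₁.verts)
    (h₂ : v ∈ H₂.verts) : v = H₁.s ∨ v = H₁.t := by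
  simpa [hc.vert_inter] using Finset.mem_inter.mpr ⟨h₁, h₂⟩

lemma exists_isUnbalancedCycle (hc : IsParallelConn2 G H₁ H₂) {vs₁ es₁ vs₂ es₂ : List ℕ}
    (hp₁ : H₁.IsPathBetween H₁.s H₁.t vs₁ es₁) (hp₂ : H₂.IsPathBetween H₂.s H₂.t vs₂ es₂)
    (hodd : Odd (H₁.negCount es₁ + H₂.negCount es₂)) :
    ∃ vs, G.IsUnbalancedCycle vs (es₁ ++ es₂.reverse) := by
  have hp₂' := hc.sub2.isPathBetween hp₂
  rw [← hc.src_eq, ← hc.tgt_eq] at hp₂'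
  obtain ⟨vs, hC⟩ := (hc.sub1.isPathBetween hp₁).isCycle_append_reverse hp₂' H₁.s_ne_t
    (fun v hv₁ hv₂ => hc.eq_or_eq_of_mem (hp₁.verts_mem v hv₁) (hp₂.verts_mem v hv₂))
    (fun e he₁ he₂ => Finset.disjoint_left.mp hc.edge_disj (hp₁.edges_mem e he₁)
      (hp₂.edges_mem e he₂))
  refine ⟨vs, hC, ?_⟩
  rwa [negCount_append, negCount_reverse, hc.sub1.negCount_eq hp₁.edges_mem,
    hc.sub2.negCount_eq hp₂.edges_mem]

/-- Either the balancing partitions of the two sides can be made to agree on both terminals,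
or they disagree on exactly one, and then all terminal paths of `H₁` have the parity opposite
to that of all terminal paths of `H₂`. -/
lemma exists_balancingPartition_or_odd (hc : IsParallelConn2 G H₁ H₂)
    {κ₁ κ₂ : ℕ → Bool} (hκ₁ : H₁.IsBalancingPartition κ₁) (hκ₂ : H₂.IsBalancingPartition κ₂) :
    (∃ κ, G.IsBalancingPartition κ) ∨ ∀ {vs₁ es₁ vs₂ es₂ : List ℕ},
      H₁.IsPathBetween H₁.s H₁.t vs₁ es₁ → H₂.IsPathBetween H₂.s H₂.t vs₂ es₂ →
      Odd (H₁.negCount es₁ + H₂.negCount es₂) := by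
  obtain ⟨κ₂, hκ₂, hs⟩ := hκ₂.exists_apply_eq H₂.s (κ₁ H₁.s)
  by_cases ht : κ₁ H₁.t = κ₂ H₂.t
  · refine Or.inl ⟨_, hκ₁.piecewise hc.sub1 hc.sub2 hc.edge_union hκ₂ fun v hv₁ hv₂ => ?_⟩
    rcases hc.eq_or_eq_of_mem hv₁ hv₂ with rfl | rfl
    · rw [← hs, hc.src_eq]
    · rw [ht, hc.tgt_eq]
  · refine Or.inr fun hp₁ hp₂ => ?_
    rw [Nat.odd_add, ← Nat.not_even_iff_odd, hp₁.even_negCount_iff hκ₁,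
      hp₂.even_negCount_iff hκ₂, hs]
    revert ht
    cases κ₁ H₁.s <;> cases κ₁ H₁.t <;> cases κ₂ H₂.t <;> simp

end IsParallelConn2

lemma IsSignedK2.exists_balancingPartition {G : TTGraph} (h : IsSignedK2 G) :
    ∃ κ, G.IsBalancingPartition κ := by
  obtain ⟨-, e₀, hedges, hjoin⟩ := h
  refine ⟨fun v => if v = G.t then G.sign e₀ else true, fun e he => ?_⟩
  obtain rfl : e = e₀ := by simpa [hedges] using he
  rcases hjoin with ⟨h₁, h₂⟩ | ⟨h₁, h₂⟩ <;> simp [h₁, h₂, G.s_ne_t]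

lemma IsSignedK2.not_isUnbalanced {G : TTGraph} (h : IsSignedK2 G) : ¬ G.IsUnbalanced :=
  h.exists_balancingPartition.elim fun _ hκ => hκ.not_isUnbalanced

namespace IsSP

variable {G : TTGraph}

/-- Stated for arbitrary `e`, so that it also provides an `s`–`t` path when `e ∉ G.edges`. -/
lemma exists_path_mem (h : IsSP G) (e : ℕ) :
    ∃ vs es, G.IsPathBetween G.s G.t vs es ∧ (e ∈ G.edges → e ∈ es) := by
  induction h with
  | @k2 G hk =>
    obtain ⟨hverts, e₀, hedges, hjoin⟩ := hk
    refine ⟨[G.s, G.t], [e₀], ⟨.cons hjoin (.nil _), rfl, rfl, by simp [G.s_ne_t],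
      by simp [hverts], by simp [hedges]⟩, fun he => by simpa [hedges] using he⟩
  | series hc _ _ ih₁ ih₂ =>
    obtain ⟨vs₁, es₁, hp₁, he₁⟩ := ih₁
    obtain ⟨vs₂, es₂, hp₂, he₂⟩ := ih₂
    refine ⟨_, _, hc.src ▸ hc.tgt ▸ hc.isPathBetween_append hp₁ hp₂, fun he => ?_⟩
    rcases Finset.mem_union.mp (hc.edge_union ▸ he) with he | he <;> simp [he₁, he₂, he]
  | @parallel G H₁ H₂ hc _ _ ih₁ ih₂ =>
    obtain ⟨vs₁, es₁, hp₁, he₁⟩ := ih₁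
    obtain ⟨vs₂, es₂, hp₂, he₂⟩ := ih₂
    by_cases he : e ∈ H₂.edges
    · have hp₂' := hc.sub2.isPathBetween hp₂
      rw [← hc.src_eq, ← hc.tgt_eq, ← hc.src, ← hc.tgt] at hp₂'
      exact ⟨vs₂, es₂, hp₂', fun _ => he₂ he⟩
    · refine ⟨vs₁, es₁, hc.src ▸ hc.tgt ▸ hc.sub1.isPathBetween hp₁, fun he' => he₁ ?_⟩
      simpa [← hc.edge_union, he] using he'

lemma exists_path (h : IsSP G) : ∃ vs es, G.IsPathBetween G.s G.t vs es :=
  let ⟨vs, es, hp, _⟩ := h.exists_path_mem 0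
  ⟨vs, es, hp⟩

lemma edges_nonempty (h : IsSP G) : G.edges.Nonempty := by
  obtain ⟨vs, es, hp⟩ := h.exists_path
  obtain ⟨e, he⟩ := List.exists_mem_of_ne_nil es (hp.edges_ne_nil G.s_ne_t)
  exact ⟨e, hp.edges_mem e he⟩

lemma exists_balancingPartition_or_isUnbalanced (h : IsSP G) :
    (∃ κ, G.IsBalancingPartition κ) ∨ G.IsUnbalanced := by
  induction h with
  | k2 hk => exact Or.inl hk.exists_balancingPartition
  | series hc _ _ ih₁ ih₂ =>
    rcases ih₁ with ih₁ | ih₁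
    · rcases ih₂ with ih₂ | ih₂
      · exact Or.inl (hc.exists_balancingPartition ih₁ ih₂)
      · exact Or.inr (hc.sub2.isUnbalanced ih₂)
    · exact Or.inr (hc.sub1.isUnbalanced ih₁)
  | parallel hc h₁ h₂ ih₁ ih₂ =>
    rcases ih₁ with ⟨κ₁, hκ₁⟩ | ih₁
    · rcases ih₂ with ⟨κ₂, hκ₂⟩ | ih₂
      · refine (hc.exists_balancingPartition_or_odd hκ₁ hκ₂).imp id fun hodd => ?_
        obtain ⟨vs₁, es₁, hp₁⟩ := h₁.exists_path
        obtain ⟨vs₂, es₂, hp₂⟩ := h₂.exists_path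
        obtain ⟨vs, hC⟩ := hc.exists_isUnbalancedCycle hp₁ hp₂ (hodd hp₁ hp₂)
        exact ⟨vs, _, hC⟩
      · exact Or.inr (hc.sub2.isUnbalanced ih₂)
    · exact Or.inr (hc.sub1.isUnbalanced ih₁)

end IsSP

lemma odd_add_or_odd_add {a a' : ℕ} (h : Odd (a + a')) (b : ℕ) : Odd (a + b) ∨ Odd (a' + b) := by
  simp only [Nat.odd_iff] at h ⊢
  omega

namespace TTGraph

def IsOppositePair (G : TTGraph) (es es' : List ℕ) : Prop :=
  (∃ vs, G.IsPathBetween G.s G.t vs es) ∧ (∃ vs', G.IsPathBetween G.s G.t vs' es') ∧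
    Odd (G.negCount es + G.negCount es')

def InOppositePair (G : TTGraph) (e : ℕ) : Prop :=
  ∃ es es', e ∈ es ∧ e ∈ es' ∧ G.IsOppositePair es es'

end TTGraph

namespace IsSeriesConn2

variable {G H₁ H₂ : TTGraph} {es es' : List ℕ}

lemma isOppositePair_left (hc : IsSeriesConn2 G H₁ H₂) (h : H₁.IsOppositePair es es')
    {vsq esq : List ℕ} (hq : H₂.IsPathBetween H₂.s H₂.t vsq esq) :
    G.IsOppositePair (es ++ esq) (es' ++ esq) := by
  obtain ⟨⟨vs, hp⟩, ⟨vs', hp'⟩, hodd⟩ := h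
  refine ⟨⟨_, hc.src ▸ hc.tgt ▸ hc.isPathBetween_append hp hq⟩,
    ⟨_, hc.src ▸ hc.tgt ▸ hc.isPathBetween_append hp' hq⟩, ?_⟩
  rw [hc.negCount_append hp.edges_mem hq.edges_mem, hc.negCount_append hp'.edges_mem hq.edges_mem]
  simp only [Nat.odd_iff] at hodd ⊢
  omega

lemma isOppositePair_right (hc : IsSeriesConn2 G H₁ H₂) {vsp esp : List ℕ}
    (hp : H₁.IsPathBetween H₁.s H₁.t vsp esp) (h : H₂.IsOppositePair es es') :
    G.IsOppositePair (esp ++ es) (esp ++ es') := by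
  obtain ⟨⟨vs, hq⟩, ⟨vs', hq'⟩, hodd⟩ := h
  refine ⟨⟨_, hc.src ▸ hc.tgt ▸ hc.isPathBetween_append hp hq⟩,
    ⟨_, hc.src ▸ hc.tgt ▸ hc.isPathBetween_append hp hq'⟩, ?_⟩
  rw [hc.negCount_append hp.edges_mem hq.edges_mem, hc.negCount_append hp.edges_mem hq'.edges_mem]
  simp only [Nat.odd_iff] at hodd ⊢
  omega

lemma isUnbalanced_or_isUnbalanced (hc : IsSeriesConn2 G H₁ H₂) (h₁ : IsSP H₁) (h₂ : IsSP H₂)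
    (hunb : G.IsUnbalanced) : H₁.IsUnbalanced ∨ H₂.IsUnbalanced := by
  refine h₁.exists_balancingPartition_or_isUnbalanced.symm.imp_right fun hb₁ => ?_
  refine h₂.exists_balancingPartition_or_isUnbalanced.resolve_left fun hb₂ => ?_
  obtain ⟨κ, hκ⟩ := hc.exists_balancingPartition hb₁ hb₂
  exact hκ.not_isUnbalanced hunb

end IsSeriesConn2

namespace IsParallelConn2

variable {G H₁ H₂ : TTGraph} {es es' : List ℕ}

lemma isOppositePair_left (hc : IsParallelConn2 G H₁ H₂) (h : H₁.IsOppositePair es es') :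
    G.IsOppositePair es es' := by
  obtain ⟨⟨vs, hp⟩, ⟨vs', hp'⟩, hodd⟩ := h
  refine ⟨⟨vs, hc.src ▸ hc.tgt ▸ hc.sub1.isPathBetween hp⟩,
    ⟨vs', hc.src ▸ hc.tgt ▸ hc.sub1.isPathBetween hp'⟩, ?_⟩
  rwa [hc.sub1.negCount_eq hp.edges_mem, hc.sub1.negCount_eq hp'.edges_mem]

lemma isOppositePair_of_odd (hc : IsParallelConn2 G H₁ H₂) {vs₁ es₁ vs₂ es₂ : List ℕ}
    (hp₁ : H₁.IsPathBetween H₁.s H₁.t vs₁ es₁) (hp₂ : H₂.IsPathBetween H₂.s H₂.t vs₂ es₂)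
    (hodd : Odd (H₁.negCount es₁ + H₂.negCount es₂)) : G.IsOppositePair es₁ es₂ := by
  have hp₂' := hc.sub2.isPathBetween hp₂
  rw [← hc.src_eq, ← hc.tgt_eq, ← hc.src, ← hc.tgt] at hp₂'
  refine ⟨⟨vs₁, hc.src ▸ hc.tgt ▸ hc.sub1.isPathBetween hp₁⟩, ⟨vs₂, hp₂'⟩, ?_⟩
  rwa [hc.sub1.negCount_eq hp₁.edges_mem, hc.sub2.negCount_eq hp₂.edges_mem]

end IsParallelConn2

namespace IsSP

variable {G : TTGraph}

lemma exists_isOppositePair (h : IsSP G) (hunb : G.IsUnbalanced) :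
    ∃ es es', G.IsOppositePair es es' := by
  induction h with
  | k2 hk => exact absurd hunb hk.not_isUnbalanced
  | series hc h₁ h₂ ih₁ ih₂ =>
    rcases hc.isUnbalanced_or_isUnbalanced h₁ h₂ hunb with hu₁ | hu₂
    · obtain ⟨es, es', hpair⟩ := ih₁ hu₁
      obtain ⟨vsq, esq, hq⟩ := h₂.exists_path
      exact ⟨_, _, hc.isOppositePair_left hpair hq⟩
    · obtain ⟨es, es', hpair⟩ := ih₂ hu₂
      obtain ⟨vsp, esp, hp⟩ := h₁.exists_path
      exact ⟨_, _, hc.isOppositePair_right hp hpair⟩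
  | parallel hc h₁ h₂ ih₁ ih₂ =>
    rcases h₁.exists_balancingPartition_or_isUnbalanced with ⟨κ₁, hκ₁⟩ | hu₁
    · rcases h₂.exists_balancingPartition_or_isUnbalanced with ⟨κ₂, hκ₂⟩ | hu₂
      · rcases hc.exists_balancingPartition_or_odd hκ₁ hκ₂ with ⟨κ, hκ⟩ | hodd
        · exact absurd hunb hκ.not_isUnbalanced
        obtain ⟨vs₁, es₁, hp₁⟩ := h₁.exists_path
        obtain ⟨vs₂, es₂, hp₂⟩ := h₂.exists_path
        exact ⟨_, _, hc.isOppositePair_of_odd hp₁ hp₂ (hodd hp₁ hp₂)⟩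
      · obtain ⟨es, es', hpair⟩ := ih₂ hu₂
        exact ⟨_, _, hc.symm.isOppositePair_left hpair⟩
    · obtain ⟨es, es', hpair⟩ := ih₁ hu₁
      exact ⟨_, _, hc.isOppositePair_left hpair⟩

end IsSP

variable {G H₁ H₂ : TTGraph} in
lemma IsParallelConn2.inUnbalancedCycle_of_mem_left (hc : IsParallelConn2 G H₁ H₂) (h₁ : IsSP H₁)
    (h₂ : IsSP H₂) (hunb : G.IsUnbalanced) {e : ℕ}
    (ih : H₁.IsUnbalanced → H₁.InUnbalancedCycle e ∨ H₁.InOppositePair e) (he : e ∈ H₁.edges) :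
    G.InUnbalancedCycle e := by
  by_cases hcyc : H₁.InUnbalancedCycle e
  · exact hc.sub1.inUnbalancedCycle hcyc
  suffices ∃ vs₁ es₁ vs₂ es₂, H₁.IsPathBetween H₁.s H₁.t vs₁ es₁ ∧ e ∈ es₁ ∧
      H₂.IsPathBetween H₂.s H₂.t vs₂ es₂ ∧ Odd (H₁.negCount es₁ + H₂.negCount es₂) by
    obtain ⟨vs₁, es₁, vs₂, es₂, hp₁, he₁, hp₂, hodd⟩ := this
    obtain ⟨vs, hC⟩ := hc.exists_isUnbalancedCycle hp₁ hp₂ hodd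
    exact ⟨vs, _, hC, List.mem_append_left _ he₁⟩
  obtain ⟨vsp, esp, hp, hep⟩ := h₁.exists_path_mem e
  obtain ⟨vsq, esq, hq⟩ := h₂.exists_path
  rcases h₁.exists_balancingPartition_or_isUnbalanced with ⟨κ₁, hκ₁⟩ | hu₁
  · rcases h₂.exists_balancingPartition_or_isUnbalanced with ⟨κ₂, hκ₂⟩ | hu₂
    · rcases hc.exists_balancingPartition_or_odd hκ₁ hκ₂ with ⟨κ, hκ⟩ | hodd
      · exact absurd hunb hκ.not_isUnbalanced
      · exact ⟨_, _, _, _, hp, hep he, hq, hodd hp hq⟩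
    · obtain ⟨es, es', ⟨vs, hq₁⟩, ⟨vs', hq₂⟩, hodd⟩ := h₂.exists_isOppositePair hu₂
      rcases odd_add_or_odd_add hodd (H₁.negCount esp) with h | h
      · exact ⟨_, _, _, _, hp, hep he, hq₁, by rwa [add_comm]⟩
      · exact ⟨_, _, _, _, hp, hep he, hq₂, by rwa [add_comm]⟩
  · obtain ⟨es, es', he₁, he₂, ⟨vs, hp₁⟩, ⟨vs', hp₂⟩, hodd⟩ := (ih hu₁).resolve_left hcyc
    rcases odd_add_or_odd_add hodd (H₂.negCount esq) with h | h
    exacts [⟨_, _, _, _, hp₁, he₁, hq, h⟩, ⟨_, _, _, _, hp₂, he₂, hq, h⟩]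

/-- The strengthened induction hypothesis behind `IsParallelConn2.inUnbalancedCycle`. -/
lemma IsSP.inUnbalancedCycle_or_inOppositePair {G : TTGraph} (h : IsSP G)
    (hunb : G.IsUnbalanced) {e : ℕ} (he : e ∈ G.edges) :
    G.InUnbalancedCycle e ∨ G.InOppositePair e := by
  induction h with
  | k2 hk => exact absurd hunb hk.not_isUnbalanced
  | @series G H₁ H₂ hc h₁ h₂ ih₁ ih₂ =>
    have hu := hc.isUnbalanced_or_isUnbalanced h₁ h₂ hunb
    rcases Finset.mem_union.mp (hc.edge_union ▸ he) with he | he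
    · by_cases hu₁ : H₁.IsUnbalanced
      · rcases ih₁ hu₁ he with hcyc | ⟨es, es', he₁, he₂, hpair⟩
        · exact Or.inl (hc.sub1.inUnbalancedCycle hcyc)
        · obtain ⟨vsq, esq, hq⟩ := h₂.exists_path
          exact Or.inr ⟨_, _, by simp [he₁], by simp [he₂], hc.isOppositePair_left hpair hq⟩
      · obtain ⟨es, es', hpair⟩ := h₂.exists_isOppositePair (hu.resolve_left hu₁)
        obtain ⟨vsp, esp, hp, hep⟩ := h₁.exists_path_mem e
        exact Or.inr ⟨_, _, by simp [hep he], by simp [hep he], hc.isOppositePair_right hp hpair⟩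
    · by_cases hu₂ : H₂.IsUnbalanced
      · rcases ih₂ hu₂ he with hcyc | ⟨es, es', he₁, he₂, hpair⟩
        · exact Or.inl (hc.sub2.inUnbalancedCycle hcyc)
        · obtain ⟨vsp, esp, hp⟩ := h₁.exists_path
          exact Or.inr ⟨_, _, by simp [he₁], by simp [he₂], hc.isOppositePair_right hp hpair⟩
      · obtain ⟨es, es', hpair⟩ := h₁.exists_isOppositePair (hu.resolve_right hu₂)
        obtain ⟨vsq, esq, hq, heq⟩ := h₂.exists_path_mem e
        exact Or.inr ⟨_, _, by simp [heq he], by simp [heq he], hc.isOppositePair_left hpair hq⟩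
  | parallel hc h₁ h₂ ih₁ ih₂ =>
    rcases Finset.mem_union.mp (hc.edge_union ▸ he) with he | he
    · exact Or.inl (hc.inUnbalancedCycle_of_mem_left h₁ h₂ hunb (ih₁ · he) he)
    · exact Or.inl (hc.symm.inUnbalancedCycle_of_mem_left h₂ h₁ hunb (ih₂ · he) he)

lemma IsParallelConn2.inUnbalancedCycle {G H₁ H₂ : TTGraph} (hc : IsParallelConn2 G H₁ H₂)
    (h₁ : IsSP H₁) (h₂ : IsSP H₂) (hunb : G.IsUnbalanced) {e : ℕ} (he : e ∈ G.edges) :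
    G.InUnbalancedCycle e := by
  rcases Finset.mem_union.mp (hc.edge_union ▸ he) with he | he
  · exact hc.inUnbalancedCycle_of_mem_left h₁ h₂ hunb
      (h₁.inUnbalancedCycle_or_inOppositePair · he) he
  · exact hc.symm.inUnbalancedCycle_of_mem_left h₂ h₁ hunb
      (h₂.inUnbalancedCycle_or_inOppositePair · he) he


lemma IsSP.exists_isLollipop {G : TTGraph} (h : IsSP G) {a : ℕ} (ha : a = G.s ∨ a = G.t)
    {vsC esC : List ℕ} (hC : G.IsUnbalancedCycle vsC esC) :
    ∃ x vs es, G.IsLollipop a x vsC esC vs es := by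
  obtain ⟨f, hf⟩ := List.exists_mem_of_ne_nil esC hC.1.nonempty
  obtain ⟨vs, es, hp, hfp⟩ := h.exists_path_mem f
  have hfst : G.fst f ∈ vs := (hp.isWalk.fst_mem_and_snd_mem (hfp (hC.1.emem f hf))).1
  obtain ⟨vs', es', hp'⟩ : ∃ vs' es', G.IsPathBetween a (if a = G.s then G.t else G.s) vs' es' ∧
      G.fst f ∈ vs' := by
    rcases ha with rfl | rfl
    · exact ⟨vs, es, by simpa using hp, hfst⟩
    · exact ⟨vs.reverse, es.reverse, by simpa [G.s_ne_t.symm] using hp.reverse,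
        List.mem_reverse.mpr hfst⟩
  obtain ⟨x, vs'', es'', hq, hx, huniq⟩ := hp'.1.exists_prefix (· ∈ vsC)
    ⟨_, hp'.2, hC.1.fst_mem hf⟩
  exact ⟨x, vs'', es'', hC, hq, hx, huniq⟩

lemma IsSP.inLollipop {G : TTGraph} (h : IsSP G) {a e : ℕ} (ha : a = G.s ∨ a = G.t)
    (he : G.InUnbalancedCycle e) : G.InLollipop a e :=
  let ⟨vsC, esC, hC, heC⟩ := he
  let ⟨x, vs, es, hL⟩ := h.exists_isLollipop ha hC
  ⟨x, vsC, esC, vs, es, hL, Or.inl heC⟩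

namespace IsSeriesConn2

variable {G H₁ H₂ : TTGraph}

lemma isLollipop_append (hc : IsSeriesConn2 G H₁ H₂) {vsp esp : List ℕ}
    (hp : H₁.IsPathBetween H₁.s H₁.t vsp esp) {x : ℕ} {vsC esC vs es : List ℕ}
    (hL : H₂.IsLollipop H₂.s x vsC esC vs es) :
    G.IsLollipop G.s x vsC esC (vsp ++ vs.tail) (esp ++ es) := by
  refine ⟨hc.sub2.isUnbalancedCycle hL.cycle, hc.src ▸ hc.isPathBetween_append hp hL.path,
    hL.mem, fun v hv hvC => ?_⟩
  rcases List.mem_append.mp hv with hv | hv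
  · obtain rfl := hc.eq_of_mem (hp.verts_mem v hv) (hL.cycle.1.vmem v hvC)
    exact hL.eq_of_mem _ (hc.mid ▸ hL.path.left_mem) hvC
  · exact hL.eq_of_mem v (List.mem_of_mem_tail hv) hvC

/-- The two cycles can meet only in the cut vertex `H₁.t = H₂.s`, and then both sticks are
trivial. -/
lemma isBarbell (hc : IsSeriesConn2 G H₁ H₂) {x₁ x₂ : ℕ}
    {vs₁ es₁ vsR esR vs₂ es₂ vsQ esQ : List ℕ}
    (hL₁ : H₁.IsLollipop H₁.t x₁ vs₁ es₁ vsR esR) (hL₂ : H₂.IsLollipop H₂.s x₂ vs₂ es₂ vsQ esQ) :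
    G.IsBarbell vs₁ es₁ vs₂ es₂ (vsR.reverse ++ vsQ.tail) (esR.reverse ++ esQ) := by
  have hP := hc.isPathBetween_append hL₁.path.reverse hL₂.path
  have hmem₁ : ∀ v ∈ vs₁, v ∈ H₁.verts := hL₁.cycle.1.vmem
  have hmem₂ : ∀ v ∈ vs₂, v ∈ H₂.verts := hL₂.cycle.1.vmem
  have huniq₁ : ∀ v ∈ vsR.reverse ++ vsQ.tail, v ∈ vs₁ → v = x₁ := by
    intro v hv hv₁
    rcases List.mem_append.mp hv with hv | hv
    · exact hL₁.eq_of_mem v (List.mem_reverse.mp hv) hv₁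
    · obtain rfl := hc.eq_of_mem (hmem₁ v hv₁) (hL₂.path.verts_mem v (List.mem_of_mem_tail hv))
      exact hL₁.eq_of_mem _ hL₁.path.left_mem hv₁
  have huniq₂ : ∀ v ∈ vsR.reverse ++ vsQ.tail, v ∈ vs₂ → v = x₂ := by
    intro v hv hv₂
    rcases List.mem_append.mp hv with hv | hv
    · obtain rfl := hc.eq_of_mem (hL₁.path.verts_mem v (List.mem_reverse.mp hv)) (hmem₂ v hv₂)
      exact hL₂.eq_of_mem _ (hc.mid ▸ hL₂.path.left_mem) hv₂
    · exact hL₂.eq_of_mem v (List.mem_of_mem_tail hv) hv₂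
  refine ⟨hc.sub1.isUnbalancedCycle hL₁.cycle, hc.sub2.isUnbalancedCycle hL₂.cycle,
    fun e he₁ he₂ => Finset.disjoint_left.mp hc.edge_disj (hL₁.cycle.1.emem e he₁)
      (hL₂.cycle.1.emem e he₂), hP.isPath, ?_⟩
  by_cases hdisj : ∀ v ∈ vs₁, v ∉ vs₂
  · have hlen := hP.isWalk.length_eq
    refine Or.inl ⟨hdisj, hP.getD_zero ▸ hL₁.mem, hP.getD_length_sub_one ▸ hL₂.mem,
      fun i hi₀ hi => ⟨fun hv₁ => ?_, fun hv₂ => ?_⟩⟩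
    · have := huniq₁ _ (List.getD_mem_of_lt 0 (by omega)) hv₁
      rw [← hP.getD_zero] at this
      exact absurd (hP.nodup.getD_inj (by omega) (by omega) this) (by omega)
    · have := huniq₂ _ (List.getD_mem_of_lt 0 (by omega)) hv₂
      rw [← hP.getD_length_sub_one] at this
      exact absurd (hP.nodup.getD_inj (by omega) (by omega) this) (by omega)
  · push Not at hdisj
    obtain ⟨w, hw₁, hw₂⟩ := hdisj
    obtain rfl := hc.eq_of_mem (hmem₁ w hw₁) (hmem₂ w hw₂)
    have hx₁ : H₁.t = x₁ := hL₁.eq_of_mem _ hL₁.path.left_mem hw₁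
    have hx₂ : H₂.s = x₂ := hL₂.eq_of_mem _ hL₂.path.left_mem (hc.mid ▸ hw₂)
    obtain ⟨rfl, rfl⟩ := (hx₁ ▸ hL₁.path).eq_singleton
    obtain ⟨rfl, rfl⟩ := (hx₂ ▸ hL₂.path).eq_singleton
    exact Or.inr ⟨H₁.t, hw₁, hw₂,
      fun v hv₁ hv₂ => hc.eq_of_mem (hmem₁ v hv₁) (hmem₂ v hv₂), by simp [hx₁], by simp⟩

lemma exists_isBarbell (hc : IsSeriesConn2 G H₁ H₂) (h₁ : IsSP H₁) (h₂ : IsSP H₂)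
    (hL₁ : ∀ f ∈ H₁.edges, H₁.InLollipop H₁.t f) (hL₂ : ∀ f ∈ H₂.edges, H₂.InLollipop H₂.s f)
    {e : ℕ} (he : e ∈ G.edges) :
    ∃ vs₁ es₁ vs₂ es₂ pvs pes : List ℕ,
      G.IsBarbell vs₁ es₁ vs₂ es₂ pvs pes ∧ (e ∈ es₁ ∨ e ∈ es₂ ∨ e ∈ pes) := by
  rcases Finset.mem_union.mp (hc.edge_union ▸ he) with he | he
  · obtain ⟨x₁, vs₁, es₁, vsR, esR, hB₁, he₁⟩ := hL₁ e he
    obtain ⟨f, hf⟩ := h₂.edges_nonempty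
    obtain ⟨x₂, vs₂, es₂, vsQ, esQ, hB₂, -⟩ := hL₂ f hf
    refine ⟨_, _, _, _, _, _, hc.isBarbell hB₁ hB₂, ?_⟩
    rcases he₁ with he₁ | he₁ <;> simp [he₁]
  · obtain ⟨f, hf⟩ := h₁.edges_nonempty
    obtain ⟨x₁, vs₁, es₁, vsR, esR, hB₁, -⟩ := hL₁ f hf
    obtain ⟨x₂, vs₂, es₂, vsQ, esQ, hB₂, he₂⟩ := hL₂ e he
    refine ⟨_, _, _, _, _, _, hc.isBarbell hB₁ hB₂, ?_⟩
    rcases he₂ with he₂ | he₂ <;> simp [he₂]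

end IsSeriesConn2

def TTGraph.unionOfSubgraphs (G B X : TTGraph) (hB : B.IsSubgraph G.toSignedGraph)
    (hX : X.IsSubgraph G.toSignedGraph) (hst : B.s ≠ X.t) : TTGraph where
  verts := B.verts ∪ X.verts
  edges := B.edges ∪ X.edges
  fst := G.fst
  snd := G.snd
  sign := G.sign
  fst_mem e he := by
    rcases Finset.mem_union.mp he with he | he
    · exact (hB.2.2 e he).1 ▸ Finset.mem_union_left _ (B.fst_mem e he)
    · exact (hX.2.2 e he).1 ▸ Finset.mem_union_right _ (X.fst_mem e he)
  snd_mem e he := by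
    rcases Finset.mem_union.mp he with he | he
    · exact (hB.2.2 e he).2.1 ▸ Finset.mem_union_left _ (B.snd_mem e he)
    · exact (hX.2.2 e he).2.1 ▸ Finset.mem_union_right _ (X.snd_mem e he)
  s := B.s
  t := X.t
  s_mem := Finset.mem_union_left _ B.s_mem
  t_mem := Finset.mem_union_right _ X.t_mem
  s_ne_t := hst

namespace IsSeriesConn2

variable {G H₁ H₂ : TTGraph}

lemma inLollipop (hc : IsSeriesConn2 G H₁ H₂) (h₁ : IsSP H₁) (h₂ : IsSP H₂)
    (hL₂ : ∀ f ∈ H₂.edges, H₂.InLollipop H₂.s f) {e : ℕ} (he : e ∈ G.edges) :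
    G.InLollipop G.s e := by
  obtain ⟨vsp, esp, hp, hep⟩ := h₁.exists_path_mem e
  by_cases he₂ : e ∈ H₂.edges
  · obtain ⟨x, vsC, esC, vs, es, hL, he'⟩ := hL₂ e he₂
    exact ⟨x, vsC, esC, _, _, hc.isLollipop_append hp hL, by rcases he' with h | h <;> simp [h]⟩
  · obtain ⟨f, hf⟩ := h₂.edges_nonempty
    obtain ⟨x, vsC, esC, vs, es, hL, -⟩ := hL₂ f hf
    have he₁ : e ∈ H₁.edges := by simpa [← hc.edge_union, he₂] using he
    exact ⟨x, vsC, esC, _, _, hc.isLollipop_append hp hL, by simp [hep he₁]⟩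

/-- Reassociation `S(S(A, B), X) = S(A, S(B, X))`. -/
lemma exists_assoc {H X A B : TTGraph} (hc : IsSeriesConn2 G H X) (hab : IsSeriesConn2 H A B) :
    ∃ W, IsSeriesConn2 G A W ∧ IsSeriesConn2 W B X := by
  have hBG := hab.sub2.trans hc.sub1
  have hBX : ∀ v ∈ B.verts, v ∈ X.verts → v = B.t := fun v hB hX =>
    (hc.eq_of_mem (hab.sub2.1 hB) hX).trans hab.tgt
  have hAX : ∀ v ∈ A.verts, v ∉ X.verts := fun v hA hX => by
    have hvt : v = B.t := (hc.eq_of_mem (hab.sub1.1 hA) hX).trans hab.tgt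
    exact B.s_ne_t (hab.mid ▸ (hab.eq_of_mem hA (hvt ▸ B.t_mem)) ▸ hvt)
  let W := TTGraph.unionOfSubgraphs G B X hBG hc.sub2
    fun h => B.s_ne_t (hBX _ B.s_mem (h ▸ X.t_mem))
  have hdisjB : Disjoint B.edges X.edges :=
    Finset.disjoint_of_subset_left hab.sub2.2.1 hc.edge_disj
  refine ⟨W, ⟨hab.sub1.trans hc.sub1, ⟨Finset.union_subset hBG.1 hc.sub2.1,
      Finset.union_subset hBG.2.1 hc.sub2.2.1, fun _ _ => ⟨rfl, rfl, rfl⟩⟩, ?_, ?_, hab.mid, ?_,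
      ?_, hc.src.trans hab.src, hc.tgt⟩,
    ⟨⟨Finset.subset_union_left, Finset.subset_union_left, hBG.2.2⟩,
      ⟨Finset.subset_union_right, Finset.subset_union_right, hc.sub2.2.2⟩, rfl, ?_,
      hab.tgt.symm.trans hc.mid, rfl, hdisjB, rfl, rfl⟩⟩
  · show A.verts ∪ (B.verts ∪ X.verts) = G.verts
    rw [← Finset.union_assoc, hab.vert_union, hc.vert_union]
  · show A.verts ∩ (B.verts ∪ X.verts) = {A.t}
    rw [Finset.inter_union_distrib_left, hab.vert_inter,
      Finset.disjoint_iff_inter_eq_empty.mp (Finset.disjoint_left.mpr hAX), Finset.union_empty]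
  · show A.edges ∪ (B.edges ∪ X.edges) = G.edges
    rw [← Finset.union_assoc, hab.edge_union, hc.edge_union]
  · exact Finset.disjoint_union_right.mpr
      ⟨hab.edge_disj, Finset.disjoint_of_subset_left hab.sub1.2.1 hc.edge_disj⟩
  · refine Finset.Subset.antisymm (fun v hv => ?_) ?_
    · obtain ⟨hB, hX⟩ := Finset.mem_inter.mp hv
      exact Finset.mem_singleton.mpr (hBX v hB hX)
    · rw [Finset.singleton_subset_iff, ← hab.tgt]
      exact Finset.mem_inter.mpr ⟨hab.tgt ▸ B.t_mem, hc.mid ▸ X.s_mem⟩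

end IsSeriesConn2

/-- Like `IsSeriesConnList`, but also admitting a single part. -/
inductive IsSeriesChain : TTGraph → List TTGraph → Prop
  | single (H : TTGraph) : IsSeriesChain H [H]
  | cons {G G' H : TTGraph} {l : List TTGraph} :
      IsSeriesConn2 G H G' → IsSeriesChain G' l → IsSeriesChain G (H :: l)

namespace IsSeriesChain

variable {G : TTGraph} {l : List TTGraph}

lemma ne_nil (h : IsSeriesChain G l) : l ≠ [] := by
  cases h <;> simp

lemma isSP (h : IsSeriesChain G l) (hsp : ∀ H ∈ l, IsSP H) : IsSP G := by
  induction h with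
  | single H => exact hsp H (by simp)
  | cons hc _ ih => exact .series hc (hsp _ (by simp)) (ih fun H hH => hsp H (by simp [hH]))

lemma inLollipop (h : IsSeriesChain G l) (hsp : ∀ H ∈ l, IsSP H) {L : TTGraph}
    (hL : l.getLast? = some L) (hcyc : ∀ f ∈ L.edges, L.InUnbalancedCycle f) {e : ℕ}
    (he : e ∈ G.edges) : G.InLollipop G.s e := by
  induction h generalizing e with
  | single H =>
    obtain rfl : H = L := by simpa using hL
    exact (hsp H (by simp)).inLollipop (Or.inl rfl) (hcyc e he)
  | @cons G G' H l hc hl ih =>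
    have hsp' : ∀ K ∈ l, IsSP K := fun K hK => hsp K (by simp [hK])
    refine hc.inLollipop (hsp H (by simp)) (hl.isSP hsp')
      (fun f hf => ih hsp' ?_ hf) he
    obtain ⟨K, l', rfl⟩ := List.exists_cons_of_ne_nil hl.ne_nil
    simpa [List.getLast?_cons_cons] using hL

end IsSeriesChain

namespace IsSeriesConnList

variable {G : TTGraph} {l : List TTGraph}

lemma exists_isSeriesChain (h : IsSeriesConnList G l) :
    ∃ H G' l', l = H :: l' ∧ IsSeriesConn2 G H G' ∧ IsSeriesChain G' l' := by
  cases h with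
  | two hc => exact ⟨_, _, _, rfl, hc, .single _⟩
  | cons hc hl =>
    refine ⟨_, _, _, rfl, hc, ?_⟩
    clear hc
    induction hl with
    | two hc => exact .cons hc (.single _)
    | cons hc _ ih => exact .cons hc ih

lemma length_two_le (h : IsSeriesConnList G l) : 2 ≤ l.length := by
  cases h with
  | two => simp
  | cons _ hl => cases hl <;> simp

lemma split_head {H A B : TTGraph} (h : IsSeriesConnList G (H :: l)) (hab : IsSeriesConn2 H A B) :
    IsSeriesConnList G (A :: B :: l) := by
  cases h with
  | two hc =>
    obtain ⟨W, h₁, h₂⟩ := hc.exists_assoc hab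
    exact .cons h₁ (.two h₂)
  | cons hc hl =>
    obtain ⟨W, h₁, h₂⟩ := hc.exists_assoc hab
    exact .cons h₁ (.cons h₂ hl)

lemma split_last (h : IsSeriesConnList G l) {L A B : TTGraph} (hL : l.getLast? = some L)
    (hab : IsSeriesConn2 L A B) : IsSeriesConnList G (l.dropLast ++ [A, B]) := by
  induction h with
  | two hc =>
    obtain rfl : _ = L := Option.some.inj hL
    exact .cons hc (.two hab)
  | @cons G G' H l hc hl ih =>
    obtain ⟨K, l', rfl⟩ := List.exists_cons_of_ne_nil (List.ne_nil_of_length_pos (l := l)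
      (by have := hl.length_two_le; omega))
    exact .cons hc (ih (by simpa [List.getLast?_cons_cons] using hL))

end IsSeriesConnList

/-- Splitting an endpart would give a longer decomposition into series-parallel parts. -/
lemma IsEndpartOf.not_isSeriesConn2 {G H A B : TTGraph} (h : IsEndpartOf H G)
    (hab : IsSeriesConn2 H A B) (hA : IsSP A) (hB : IsSP B) : False := by
  obtain ⟨l, ⟨hl, hsp, hmax⟩, hH | hH⟩ := h
  · obtain ⟨l', rfl⟩ := List.head?_eq_some_iff.mp hH
    have := hmax _ (hl.split_head hab) (by
      simp only [List.mem_cons]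
      rintro K (rfl | rfl | hK)
      exacts [hA, hB, hsp K (by simp [hK])])
    simp at this
  · obtain ⟨l', rfl⟩ := List.getLast?_eq_some_iff.mp hH
    have := hmax _ (hl.split_last hH hab) (by
      simp only [List.dropLast_concat, List.mem_append, List.mem_cons, List.mem_nil_iff,
        or_false]
      rintro K (hK | rfl | rfl)
      exacts [hsp K (by simp [hK]), hA, hB])
    simp at this

lemma IsEndpartOf.inUnbalancedCycle {G H : TTGraph} (h : IsEndpartOf H G)
    (hunb : H.IsUnbalanced) {e : ℕ} (he : e ∈ H.edges) : H.InUnbalancedCycle e := by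
  obtain ⟨l, hparts, hH⟩ := h
  have hsp : IsSP H := hparts.2.1 H (hH.elim List.mem_of_mem_head? List.mem_of_getLast?)
  cases hsp with
  | k2 hk => exact absurd hunb hk.not_isUnbalanced
  | series hab hA hB => exact (IsEndpartOf.not_isSeriesConn2 ⟨l, hparts, hH⟩ hab hA hB).elim
  | parallel hc hA hB => exact hc.inUnbalancedCycle hA hB hunb he

theorem series_type_unbalanced_endparts_edges_in_barbell_general (G : TTGraph)
    (hser : IsSeriesType G)
    (hend : ∀ H : TTGraph, IsEndpartOf H G → H.toSignedGraph.IsUnbalanced) :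
    ∀ e ∈ G.edges, ∃ vs₁ es₁ vs₂ es₂ pvs pes : List ℕ,
      G.toSignedGraph.IsBarbell vs₁ es₁ vs₂ es₂ pvs pes ∧
      (e ∈ es₁ ∨ e ∈ es₂ ∨ e ∈ pes) := by
  intro e he
  obtain ⟨l, hparts⟩ := hser
  obtain ⟨G₁, X, rest, rfl, hc, hX⟩ := hparts.1.exists_isSeriesChain
  obtain ⟨L, hL⟩ : ∃ L, rest.getLast? = some L :=
    ⟨_, List.getLast?_eq_some_getLast hX.ne_nil⟩
  have hend₁ : IsEndpartOf G₁ G := ⟨_, hparts, Or.inl rfl⟩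
  have hendL : IsEndpartOf L G := ⟨_, hparts, Or.inr (by
    obtain ⟨K, l', rfl⟩ := List.exists_cons_of_ne_nil hX.ne_nil
    simpa [List.getLast?_cons_cons] using hL)⟩
  have hsp₁ : IsSP G₁ := hparts.2.1 G₁ (by simp)
  have hsp : ∀ H ∈ rest, IsSP H := fun H hH => hparts.2.1 H (List.mem_cons_of_mem _ hH)
  exact hc.exists_isBarbell hsp₁ (hX.isSP hsp)
    (fun f hf => hsp₁.inLollipop (Or.inr rfl) (hend₁.inUnbalancedCycle (hend G₁ hend₁) hf))
    (fun f hf => hX.inLollipop hsp hL (fun _ => (hendL.inUnbalancedCycle (hend L hendL))) hf) he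

/-- If a signed series-parallel graph is of series type and
both of its endparts are unbalanced, then every edge is contained in a
barbell. -/
theorem series_type_unbalanced_endparts_edges_in_barbell (G : TTGraph)
    (hSP : IsSP G) (hser : IsSeriesType G)
    (hend : ∀ H : TTGraph, IsEndpartOf H G → H.toSignedGraph.IsUnbalanced) :
    ∀ e ∈ G.edges, ∃ vs₁ es₁ vs₂ es₂ pvs pes : List ℕ,
      G.toSignedGraph.IsBarbell vs₁ es₁ vs₂ es₂ pvs pes ∧
      (e ∈ es₁ ∨ e ∈ es₂ ∨ e ∈ pes) :=
  series_type_unbalanced_endparts_edges_in_barbell_general G hser hend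
end

section
/- Let a, b be integers with a ≡ b (mod 2) and let D be the unbalanced 2-cycle with its two vertices as terminals. If D admits an (a,b)-pseudoflow, then a ≠ b and a ≠ −b. Conversely, if a ≠ b, a ≠ −b and a, b ∈ I5 = {−5,…,5}, then D admits an (a,b)-pseudoflow. -/
/-!
Write `x` and `y` for the values that the positive edge and the negative edge of `D`
send into `s`. The orientation rule makes them arrive at `t` as `-x` and `y`, so an
`(a,b)`-pseudoflow is exactly a choice of nonzero `x, y` with `x + y = -a` and
`y - x = b`; that is, `a + b = -2x` and `b - a = 2y`.
-/

namespace SignedGraph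

variable {G : SignedGraph} {o₁ o₂ : ℕ → Bool} {φ : ℕ → ℤ} {e f u v : ℕ}

def endFlow (G : SignedGraph) (o₁ o₂ : ℕ → Bool) (φ : ℕ → ℤ) (e v : ℕ) : ℤ :=
  (if G.fst e = v then dirVal (o₁ e) * φ e else 0) +
    (if G.snd e = v then dirVal (o₂ e) * φ e else 0)

theorem excess_eq_endFlow_add_endFlow (hE : G.edges = {e, f}) (hef : e ≠ f) :
    G.excess o₁ o₂ φ v = G.endFlow o₁ o₂ φ e v + G.endFlow o₁ o₂ φ f v := by
  rw [excess, hE, Finset.sum_pair hef, endFlow, endFlow]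

theorem endFlow_ne_zero (h : G.Joins e u v) (huv : u ≠ v) (hφ : φ e ≠ 0) :
    G.endFlow o₁ o₂ φ e u ≠ 0 := by
  rcases h with ⟨h₁, h₂⟩ | ⟨h₁, h₂⟩ <;>
    cases hx : o₁ e <;> cases hy : o₂ e <;>
    simp [endFlow, dirVal, h₁, h₂, hx, hy, huv.symm, hφ]

theorem endFlow_of_joins (ho : G.IsOrientation o₁ o₂) (he : e ∈ G.edges)
    (h : G.Joins e u v) (huv : u ≠ v) :
    G.endFlow o₁ o₂ φ e v = -(dirVal (G.sign e) * G.endFlow o₁ o₂ φ e u) := by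
  have ho := ho e he
  rcases h with ⟨h₁, h₂⟩ | ⟨h₁, h₂⟩ <;>
    cases hs : G.sign e <;> cases hx : o₁ e <;> cases hy : o₂ e <;>
    simp_all [endFlow, dirVal, huv.symm]

/-- With `inwardSnd`: the orientation in which every half-edge at `s` points towards `s`. -/
def inwardFst (G : SignedGraph) (s : ℕ) (g : ℕ) : Bool :=
  if G.fst g = s then true else !G.sign g

def inwardSnd (G : SignedGraph) (s : ℕ) (g : ℕ) : Bool :=
  if G.fst g = s then !G.sign g else true

theorem isOrientation_inward (s : ℕ) : G.IsOrientation (G.inwardFst s) (G.inwardSnd s) := by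
  intro g _
  by_cases h : G.fst g = s <;> cases hs : G.sign g <;> simp [inwardFst, inwardSnd, h, hs]

theorem endFlow_inward (h : G.Joins e u v) (huv : u ≠ v) :
    G.endFlow (G.inwardFst u) (G.inwardSnd u) φ e u = φ e := by
  rcases h with ⟨h₁, h₂⟩ | ⟨h₁, h₂⟩ <;>
    simp [endFlow, inwardFst, inwardSnd, dirVal, h₁, h₂, huv.symm]

end SignedGraph

namespace IsUnbalanced2Cycle

open SignedGraph

variable {G : TTGraph} {a b : ℤ}

theorem exists_pos_neg (hD : IsUnbalanced2Cycle G) :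
    ∃ e f, e ≠ f ∧ G.edges = {e, f} ∧
      G.Joins e G.s G.t ∧ G.Joins f G.s G.t ∧ G.sign e = true ∧ G.sign f = false := by
  obtain ⟨-, e, f, hef, hE, he, hf, hsign⟩ := hD
  cases hse : G.sign e
  · exact ⟨f, e, hef.symm, hE.trans (Finset.pair_comm e f), hf, he,
      by simpa [hse] using Ne.symm hsign, hse⟩
  · exact ⟨e, f, hef, hE, he, hf, hse, by simpa [hse] using Ne.symm hsign⟩

theorem excess_target {e f : ℕ} {o₁ o₂ : ℕ → Bool} {φ : ℕ → ℤ}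
    (hef : e ≠ f) (hE : G.edges = {e, f}) (he : G.Joins e G.s G.t) (hf : G.Joins f G.s G.t)
    (hse : G.sign e = true) (hsf : G.sign f = false) (ho : G.IsOrientation o₁ o₂) :
    G.excess o₁ o₂ φ G.t = G.endFlow o₁ o₂ φ f G.s - G.endFlow o₁ o₂ φ e G.s := by
  rw [excess_eq_endFlow_add_endFlow hE hef,
    endFlow_of_joins ho (by simp [hE]) he G.s_ne_t,
    endFlow_of_joins ho (by simp [hE]) hf G.s_ne_t, hse, hsf]
  simp only [dirVal, Bool.false_eq_true, if_true, if_false]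
  ring

theorem ne_and_ne_neg (hD : IsUnbalanced2Cycle G) (h : HasPseudoflow G a b) :
    a ≠ b ∧ a ≠ -b := by
  obtain ⟨o₁, o₂, φ, hφ⟩ := h
  obtain ⟨e, f, hef, hE, he, hf, hse, hsf⟩ := hD.exists_pos_neg
  have hx := endFlow_ne_zero (o₁ := o₁) (o₂ := o₂) he G.s_ne_t (hφ.nonzero e (by simp [hE]))
  have hy := endFlow_ne_zero (o₁ := o₁) (o₂ := o₂) hf G.s_ne_t (hφ.nonzero f (by simp [hE]))
  have hs := hφ.out_s
  have ht := hφ.in_t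
  rw [excess_eq_endFlow_add_endFlow hE hef] at hs
  rw [excess_target hef hE he hf hse hsf hφ.orient] at ht
  omega

theorem hasPseudoflow (hD : IsUnbalanced2Cycle G) (hpar : a % 2 = b % 2)
    (hab : a ≠ b) (hab' : a ≠ -b) (hsum : |a + b| < 12) (hdiff : |b - a| < 12) :
    HasPseudoflow G a b := by
  obtain ⟨e, f, hef, hE, he, hf, hse, hsf⟩ := hD.exists_pos_neg
  let φ : ℕ → ℤ := fun g => if G.sign g then -((a + b) / 2) else (b - a) / 2
  have ho := isOrientation_inward (G := G.toSignedGraph) G.s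
  have hx : G.endFlow (G.inwardFst G.s) (G.inwardSnd G.s) φ e G.s = -((a + b) / 2) := by
    simp [endFlow_inward he G.s_ne_t, φ, hse]
  have hy : G.endFlow (G.inwardFst G.s) (G.inwardSnd G.s) φ f G.s = (b - a) / 2 := by
    simp [endFlow_inward hf G.s_ne_t, φ, hsf]
  rw [abs_lt] at hsum hdiff
  refine ⟨_, _, φ, ho, ?_, ?_, ?_, ?_, ?_⟩
  · intro g _
    dsimp only [φ]
    split_ifs <;> omega
  · intro g _
    dsimp only [φ]
    split_ifs <;> rw [abs_lt] <;> omega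
  · intro v hv hvs hvt
    simp [hD.1, hvs, hvt] at hv
  · rw [excess_eq_endFlow_add_endFlow hE hef, hx, hy]
    omega
  · rw [excess_target hef hE he hf hse hsf ho, hx, hy]
    omega

end IsUnbalanced2Cycle

/-- Let `a ≡ b (mod 2)`.  If the unbalanced 2-cycle `D`
admits an `(a,b)`-pseudoflow then `a ≠ ±b`; conversely, if `a ≠ ±b` and
`a, b ∈ I₅`, then `D` admits an `(a,b)`-pseudoflow. -/
theorem digon_pseudoflow_iff (G : TTGraph) (hD : IsUnbalanced2Cycle G)
    (a b : ℤ) (hpar : a % 2 = b % 2) :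
    (HasPseudoflow G a b → a ≠ b ∧ a ≠ -b) ∧
    (a ≠ b → a ≠ -b → a ∈ I5 → b ∈ I5 → HasPseudoflow G a b) := by
  refine ⟨hD.ne_and_ne_neg, fun hab hab' ha hb => hD.hasPseudoflow hpar hab hab' ?_ ?_⟩
  all_goals
    simp only [I5, Finset.mem_Icc] at ha hb
    rw [abs_lt]
    omega
end
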